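/- arXiv:math/0605121 — 4 statements merged into one kernel-verified Lean document; each statement's English description precedes it below -/
import Mathlib

section
/- Let f be an analytic function from the open unit disk to itself (a Schur function). If f(z) = z + O((z-1)^4) as z → 1 (within the disk), then f(z) = z for all z in the unit disk. -/
open Metric Filter

/-- The Schur class: functions analytic on the open unit disk, bounded by one in modulus. -/
def SchurClass (f : ℂ → ℂ) : Prop :=
  DifferentiableOn ℂ f (ball (0 : ℂ) 1) ∧ ∀ z ∈ ball (0 : ℂ) 1, ‖f z‖ ≤ 1

open Complex Set in
lemma normSq_le_one_of_norm_le_one {w : ℂ} (hw : ‖w‖ ≤ 1) : Complex.normSq w ≤ 1 := by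
  rw [← Complex.sq_norm]
  nlinarith [norm_nonneg w]

/-- Real part of the Cayley-type quotient. -/
lemma re_cayley (w : ℂ) (hw : w ≠ 1) :
    ((1 + w) / (1 - w)).re = (1 - Complex.normSq w) / Complex.normSq (1 - w) := by
  have h : (1 : ℂ) - w ≠ 0 := sub_ne_zero.mpr (Ne.symm hw)
  have h' : Complex.normSq (1 - w) ≠ 0 := by
    simpa [Complex.normSq_eq_zero] using h
  rw [Complex.div_re]
  simp only [Complex.normSq_apply, Complex.add_re, Complex.add_im, Complex.sub_re,
    Complex.sub_im, Complex.one_re, Complex.one_im] at *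
  field_simp
  ring

lemma re_cayley_nonneg (w : ℂ) (hw : ‖w‖ ≤ 1) : 0 ≤ ((1 + w) / (1 - w)).re := by
  rcases eq_or_ne w 1 with rfl | hne
  · simp
  · rw [re_cayley w hne]
    exact div_nonneg (by linarith [normSq_le_one_of_norm_le_one hw]) (Complex.normSq_nonneg _)

open Complex in
lemma mobius_le_one (a w : ℂ) (ha : ‖a‖ ≤ 1) (hw : ‖w‖ ≤ 1) :
    ‖w - a‖ ≤ ‖1 - (starRingEnd ℂ) a * w‖ := by
  have ha' := normSq_le_one_of_norm_le_one ha
  have hw' := normSq_le_one_of_norm_le_one hw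
  apply le_of_pow_le_pow_left₀ two_ne_zero (norm_nonneg _)
  rw [Complex.sq_norm, Complex.sq_norm]
  simp only [Complex.normSq_apply, Complex.sub_re, Complex.sub_im, Complex.mul_re,
    Complex.mul_im, Complex.one_re, Complex.one_im, Complex.conj_re, Complex.conj_im] at *
  nlinarith [ha', hw']

open Complex in
lemma keyineq (α s ξ r : ℝ) (hα0 : 0 ≤ α) (hα1 : α ≤ 1) (hs0 : 0 ≤ s) (hsr : s ≤ r)
    (hr1 : r ≤ 1) (hξ : ξ ≤ α * s) :
    (s^2 + α^2 + 2*ξ) * (1 + r*α)^2 ≤ (r + α)^2 * (1 + α^2*s^2 + 2*ξ) := by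
  have hr0 : 0 ≤ r := le_trans hs0 hsr
  have h1 : 0 ≤ (α*s - ξ) * ((1 + r*α)^2 - (r + α)^2) := by
    apply mul_nonneg (by linarith)
    nlinarith [mul_nonneg (mul_nonneg (mul_nonneg (by linarith : (0:ℝ) ≤ 1+r) (by linarith : (0:ℝ) ≤ 1+α)) (by linarith : (0:ℝ) ≤ 1-r)) (by linarith : (0:ℝ) ≤ 1-α)]
  have h2 : 0 ≤ ((r - s) * (1 - α^2)) * ((r+α)*(1+α*s) + (s+α)*(1+r*α)) := by
    apply mul_nonneg
    · apply mul_nonneg (by linarith)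
      nlinarith
    · have := mul_nonneg hα0 hs0
      have := mul_nonneg hr0 hα0
      nlinarith [mul_nonneg (by linarith : (0:ℝ) ≤ r+α) (by linarith : (0:ℝ) ≤ 1+α*s), mul_nonneg (by linarith : (0:ℝ) ≤ s+α) (by linarith : (0:ℝ) ≤ 1+r*α)]
  nlinarith [h1, h2]


open Complex in
lemma mobius_radial (a m : ℂ) (r : ℝ) (ha : ‖a‖ ≤ 1) (hr1 : r ≤ 1) (hm : ‖m‖ ≤ r) :
    ‖m + a‖ * (1 + r * ‖a‖) ≤ (r + ‖a‖) * ‖1 + (starRingEnd ℂ) a * m‖ := by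
  have hs0 : (0:ℝ) ≤ ‖m‖ := norm_nonneg m
  have hr0 : (0:ℝ) ≤ r := le_trans hs0 hm
  set ξ : ℝ := ((starRingEnd ℂ) a * m).re with hξdef
  have hξ : ξ ≤ ‖a‖ * ‖m‖ := by
    calc ξ ≤ ‖(starRingEnd ℂ) a * m‖ := Complex.re_le_norm _
    _ = ‖a‖ * ‖m‖ := by
        rw [norm_mul, Complex.norm_conj]
  have e1 : ‖m + a‖^2 = ‖m‖^2 + ‖a‖^2 + 2*ξ := by
    rw [Complex.sq_norm, Complex.normSq_add,
      Complex.sq_norm, Complex.sq_norm, hξdef, mul_comm m ((starRingEnd ℂ) a)]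
  have e2 : ‖1 + (starRingEnd ℂ) a * m‖^2 = 1 + ‖a‖^2 * ‖m‖^2 + 2*ξ := by
    rw [Complex.sq_norm, Complex.normSq_add,
      Complex.sq_norm, Complex.sq_norm]
    simp [Complex.normSq_mul, Complex.normSq_conj, hξdef]
  have key := keyineq ‖a‖ ‖m‖ ξ r (norm_nonneg a) ha hs0 hm hr1 hξ
  apply le_of_pow_le_pow_left₀ two_ne_zero
    (mul_nonneg (by linarith [norm_nonneg a]) (norm_nonneg _))
  rw [mul_pow, mul_pow, e1, e2]
  exact key


open Complex Set in
lemma stepA (g : ℂ → ℂ) (hg : DifferentiableOn ℂ g (ball (0:ℂ) 1))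
    (hre : ∀ z ∈ ball (0:ℂ) 1, (-(g z)).re ≤ ((1 + z)/(1 - z)).re)
    (C δ : ℝ) (hC : 0 < C) (hδ : 0 < δ)
    (hbd : ∀ z ∈ ball (0:ℂ) 1, dist z 1 < δ → ‖g z‖ ≤ C * ‖z - 1‖^2) :
    ∀ z₀ ∈ ball (0:ℂ) 1, 0 ≤ (g z₀).re := by
  intro z₀ hz₀
  have key : ∀ ε > 0, -(g z₀).re ≤ ε := by
    intro ε hε
    have hz₀1 : ‖z₀‖ < 1 := mem_ball_zero_iff.mp hz₀
    have hz₀ne1 : z₀ ≠ 1 := by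
      intro h; rw [h] at hz₀1; simp at hz₀1
    have hdist : 0 < dist z₀ 1 := dist_pos.mpr hz₀ne1
    set ρ := min (δ/2) (min (Real.sqrt (ε/(2*C))) (dist z₀ 1 / 2)) with hρdef
    have hsq : 0 < Real.sqrt (ε/(2*C)) := Real.sqrt_pos.mpr (by positivity)
    have hρpos : 0 < ρ := lt_min (by linarith) (lt_min hsq (by linarith))
    have hρδ : ρ < δ := lt_of_le_of_lt (min_le_left _ _) (by linarith)
    have hρsq : ρ^2 ≤ ε/(2*C) := by
      have h1 : ρ ≤ Real.sqrt (ε/(2*C)) := le_trans (min_le_right _ _) (min_le_left _ _)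
      calc ρ^2 ≤ Real.sqrt (ε/(2*C))^2 := by nlinarith [hρpos.le]
      _ = ε/(2*C) := Real.sq_sqrt (by positivity)
    have hCρ : C * ρ^2 ≤ ε/2 := by
      have h2 := (le_div_iff₀ (by positivity : (0:ℝ) < 2*C)).mp hρsq
      nlinarith
    have hρz₀ : ρ < dist z₀ 1 := lt_of_le_of_lt
      (le_trans (min_le_right _ _) (min_le_right _ _)) (by linarith)
    set t := max ((1 + ‖z₀‖)/2) (1 - ε*ρ^2/4) with htdef
    have ht1 : t < 1 := by
      have hpos : 0 < ε * ρ^2 / 4 := by positivity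
      exact max_lt (by linarith) (by linarith)
    have ht0 : 0 < t := lt_of_lt_of_le (by positivity) (le_max_left _ _)
    have htz₀ : ‖z₀‖ < t := lt_of_lt_of_le (by linarith) (le_max_left _ _)
    have ht2 : 1 - t^2 ≤ ε*ρ^2/2 := by
      have h1 : 1 - ε*ρ^2/4 ≤ t := le_max_right _ _
      nlinarith [ht0.le, ht1.le]
    set U := ball (0:ℂ) t ∩ (closedBall (1:ℂ) ρ)ᶜ with hUdef
    have hz₀U : z₀ ∈ U :=
      ⟨mem_ball_zero_iff.mpr htz₀, by simp only [mem_compl_iff, mem_closedBall, not_le]; exact hρz₀⟩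
    have hUsub : U ⊆ ball (0:ℂ) 1 :=
      (inter_subset_left).trans (ball_subset_ball ht1.le)
    have hclosure : closure U ⊆ closedBall (0:ℂ) t := by
      calc closure U ⊆ closure (ball (0:ℂ) t) := closure_mono inter_subset_left
      _ = closedBall (0:ℂ) t := closure_ball _ ht0.ne'
    have hcl1 : closedBall (0:ℂ) t ⊆ ball (0:ℂ) 1 := closedBall_subset_ball ht1
    set E := fun z => Complex.exp (-(g z)) with hEdef
    have hnormE : ∀ z, ‖E z‖ = Real.exp ((-(g z)).re) := by
      intro z; rw [hEdef]; simp [Complex.norm_exp]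
    have hEdiff : DifferentiableOn ℂ E (ball (0:ℂ) 1) := hg.neg.cexp
    have hdc : DiffContOnCl ℂ E U :=
      ⟨hEdiff.mono hUsub, (hEdiff.continuousOn).mono (hclosure.trans hcl1)⟩
    have hfront : ∀ z ∈ frontier U, ‖E z‖ ≤ Real.exp ε := by
      intro z hz
      rcases frontier_inter_subset _ _ hz with h | h
      · -- on the sphere of radius t
        obtain ⟨hzf, hzc⟩ := h
        rw [frontier_ball _ ht0.ne'] at hzf
        have hznorm : ‖z‖ = t := by simpa [mem_sphere_iff_norm] using hzf
        have hzdist : ρ ≤ dist z 1 := by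
          rw [closure_compl, interior_closedBall _ hρpos.ne'] at hzc
          simpa [mem_ball] using hzc
        have hzB : z ∈ ball (0:ℂ) 1 := mem_ball_zero_iff.mpr (by rw [hznorm]; exact ht1)
        have hzne1 : z ≠ 1 := by
          intro h; rw [h] at hznorm; simp at hznorm; linarith [ht1]
        have h1 : (-(g z)).re ≤ (1 - Complex.normSq z) / Complex.normSq (1 - z) := by
          rw [← re_cayley z hzne1]; exact hre z hzB
        have h2 : Complex.normSq z = t^2 := by
          rw [← Complex.sq_norm, hznorm]
        have h3 : ρ^2 ≤ Complex.normSq (1 - z) := by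
          rw [← Complex.sq_norm]
          have : ρ ≤ ‖1 - z‖ := by rwa [norm_sub_rev, ← dist_eq_norm]
          nlinarith [hρpos.le]
        have h4 : (1 - Complex.normSq z) / Complex.normSq (1 - z) ≤ ε := by
          rw [h2, div_le_iff₀ (by nlinarith : (0:ℝ) < Complex.normSq (1 - z))]
          nlinarith [ht1.le, ht0.le, hε.le]
        rw [hnormE]
        exact Real.exp_le_exp.mpr (by linarith)
      · -- on the sphere around 1 of radius ρ
        obtain ⟨hzc, hzf⟩ := h
        rw [frontier_compl, frontier_closedBall _ hρpos.ne'] at hzf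
        have hzdist : dist z 1 = ρ := by simpa [mem_sphere, dist_eq_norm] using hzf
        rw [closure_ball _ ht0.ne'] at hzc
        have hzB : z ∈ ball (0:ℂ) 1 := hcl1 hzc
        have hzbd : ‖g z‖ ≤ C * ρ^2 := by
          have := hbd z hzB (by rw [hzdist]; exact hρδ)
          rwa [← dist_eq_norm, hzdist] at this
        have h1 : (-(g z)).re ≤ ‖g z‖ := by
          calc (-(g z)).re ≤ ‖-(g z)‖ := Complex.re_le_norm _
          _ = ‖g z‖ := by rw [norm_neg]
        rw [hnormE]
        exact Real.exp_le_exp.mpr (by linarith)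
    have hbU : Bornology.IsBounded U := (isBounded_ball).subset inter_subset_left
    have hfin := Complex.norm_le_of_forall_mem_frontier_norm_le hbU hdc hfront
      (subset_closure hz₀U)
    rw [hnormE] at hfin
    have := Real.exp_le_exp.mp hfin
    rwa [Complex.neg_re] at this
  by_contra hneg
  push_neg at hneg
  have := key (-(g z₀).re / 2) (by linarith)
  linarith


open Complex Set in
lemma stepB (g : ℂ → ℂ) (hg : DifferentiableOn ℂ g (ball (0:ℂ) 1))
    (hre : ∀ z ∈ ball (0:ℂ) 1, 0 ≤ (g z).re)
    (C δ : ℝ) (hC : 0 < C) (hδ : 0 < δ)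
    (hbd : ∀ z ∈ ball (0:ℂ) 1, dist z 1 < δ → ‖g z‖ ≤ C * ‖z - 1‖^2) :
    ∀ z ∈ ball (0:ℂ) 1, g z = 0 := by
  set B := ball (0:ℂ) 1 with hBdef
  have h0B : (0:ℂ) ∈ B := by simp [hBdef]
  set E := fun z => Complex.exp (-(g z)) with hEdef
  have hnormE : ∀ z, ‖E z‖ = Real.exp (-(g z).re) := by
    intro z; rw [hEdef]
    simp [Complex.norm_exp]
  have hEdiff : DifferentiableOn ℂ E B := hg.neg.cexp
  have hE1 : ∀ z ∈ B, ‖E z‖ ≤ 1 := by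
    intro z hz
    rw [hnormE]
    calc Real.exp (-(g z).re) ≤ Real.exp 0 := Real.exp_le_exp.mpr (by linarith [hre z hz])
    _ = 1 := Real.exp_zero
  set a := E 0 with hadef
  have hα1 : ‖a‖ ≤ 1 := hE1 0 h0B
  -- The key claim : ‖E 0‖ = 1
  have haone : ‖a‖ = 1 := by
    by_contra hne
    have hαlt : ‖a‖ < 1 := lt_of_le_of_ne hα1 hne
    have hα0 : 0 ≤ ‖a‖ := norm_nonneg a
    set M := fun z => (E z - a) / (1 - (starRingEnd ℂ) a * E z) with hMdef
    have hden : ∀ z ∈ B, 1 - (starRingEnd ℂ) a * E z ≠ 0 := by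
      intro z hz h
      have h1 : ‖(starRingEnd ℂ) a * E z‖ < 1 := by
        rw [norm_mul]
        have h2 : ‖(starRingEnd ℂ) a‖ = ‖a‖ := by
          rw [Complex.norm_conj]
        rw [h2]
        calc ‖a‖ * ‖E z‖ ≤ ‖a‖ * 1 := by
              exact mul_le_mul_of_nonneg_left (hE1 z hz) hα0
        _ = ‖a‖ := mul_one _
        _ < 1 := hαlt
      have h3 : (starRingEnd ℂ) a * E z = 1 := by linear_combination -h
      rw [h3] at h1; simp at h1
    have hMdiff : DifferentiableOn ℂ M B := by
      apply DifferentiableOn.div (hEdiff.sub (differentiableOn_const a))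
        ((differentiableOn_const 1).sub ((differentiableOn_const _).mul hEdiff)) hden
    have hM0 : M 0 = 0 := by simp [hMdef, hadef]
    have hM1 : ∀ z ∈ B, ‖M z‖ ≤ 1 := by
      intro z hz
      rw [hMdef]
      simp only [norm_div]
      apply div_le_one_of_le₀ (mobius_le_one a (E z) hα1 (hE1 z hz)) (norm_nonneg _)
    have hMsch : ∀ z ∈ B, ‖M z‖ ≤ ‖z‖ := by
      intro z hz
      have hz1 : ‖z‖ < 1 := mem_ball_zero_iff.mp hz
      refine le_of_forall_pos_le_add ?_
      intro ε hε
      have hmaps : Set.MapsTo M B (ball (M 0) (1 + ε)) := by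
        intro w hw
        rw [mem_ball, hM0, dist_zero_right]
        exact lt_of_le_of_lt (hM1 w hw) (by linarith)
      have hkey := Complex.dist_le_div_mul_dist_of_mapsTo_ball hMdiff (hmaps.mono_right ball_subset_closedBall) hz
      rw [hM0, dist_zero_right, dist_zero_right, div_one] at hkey
      nlinarith [norm_nonneg (M z), norm_nonneg z]
    -- now the radial contradiction
    set m := min (1/2) (min (δ/2) ((1 - ‖a‖)/(4*(C+1)))) with hmdef
    have hm0 : 0 < m := by
      apply lt_min (by norm_num)
      exact lt_min (by linarith) (div_pos (by linarith) (by positivity))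
    have hm12 : m ≤ 1/2 := min_le_left _ _
    have hmδ : m < δ := lt_of_le_of_lt (le_trans (min_le_right _ _) (min_le_left _ _)) (by linarith)
    have hmα : m ≤ (1 - ‖a‖)/(4*(C+1)) := le_trans (min_le_right _ _) (min_le_right _ _)
    set r : ℝ := 1 - m with hrdef
    have hr12 : 1/2 ≤ r := by simp [hrdef]; linarith
    have hr1 : r < 1 := by simp [hrdef]; linarith
    have hrB : ((r:ℂ)) ∈ B := by
      rw [hBdef, mem_ball_zero_iff, Complex.norm_real, Real.norm_eq_abs, _root_.abs_of_nonneg (by linarith)]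
      exact hr1
    have hr1' : ((r:ℂ)) - 1 = ((r - 1 : ℝ) : ℂ) := by push_cast; ring
    have hnormr1 : ‖((r:ℂ)) - 1‖ = m := by
      rw [hr1', Complex.norm_real, Real.norm_eq_abs, _root_.abs_of_nonpos (by linarith)]
      simp [hrdef]
    have hdistr : dist ((r:ℂ)) 1 = m := by rw [dist_eq_norm, hnormr1]
    have hgr : ‖g r‖ ≤ C * m^2 := by
      have := hbd r hrB (by rw [hdistr]; exact hmδ)
      rwa [hnormr1] at this
    have h1 : 1 - ‖E r‖ ≤ C * m^2 := by
      have h2 : -(g ((r:ℂ))).re + 1 ≤ Real.exp (-(g ((r:ℂ))).re) := Real.add_one_le_exp _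
      have h3 : (g ((r:ℂ))).re ≤ ‖g ((r:ℂ))‖ := by
        calc (g ((r:ℂ))).re ≤ ‖g ((r:ℂ))‖ := Complex.re_le_norm _
        _ = ‖g ((r:ℂ))‖ := rfl
      rw [hnormE]
      linarith
    -- Schwarz-Pick style bound
    have hMr : M ((r:ℂ)) * (1 - (starRingEnd ℂ) a * E ((r:ℂ))) = E ((r:ℂ)) - a :=
      div_mul_cancel₀ _ (hden _ hrB)
    have hfact : E ((r:ℂ)) * (1 + (starRingEnd ℂ) a * M ((r:ℂ))) = M ((r:ℂ)) + a := by
      linear_combination -hMr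
    have hMrr : ‖M ((r:ℂ))‖ ≤ r := by
      have := hMsch _ hrB
      rwa [Complex.norm_real, Real.norm_eq_abs, _root_.abs_of_nonneg (by linarith)] at this
    have hmob := mobius_radial a (M ((r:ℂ))) r hα1 hr1.le hMrr
    have hnorm_eq : ‖E ((r:ℂ))‖ * ‖1 + (starRingEnd ℂ) a * M ((r:ℂ))‖ = ‖M ((r:ℂ)) + a‖ := by
      rw [← norm_mul, hfact]
    clear_value E M a m r
    have hY : 0 < ‖1 + (starRingEnd ℂ) a * M ((r:ℂ))‖ := by
      have hx : ‖(starRingEnd ℂ) a * M ((r:ℂ))‖ < 1 := by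
        rw [norm_mul]
        have h2 : ‖(starRingEnd ℂ) a‖ = ‖a‖ := by
          rw [Complex.norm_conj]
        rw [h2]
        calc ‖a‖ * ‖M ((r:ℂ))‖ ≤ 1 * ‖M ((r:ℂ))‖ :=
              mul_le_mul_of_nonneg_right hα1 (norm_nonneg _)
        _ = ‖M ((r:ℂ))‖ := one_mul _
        _ ≤ r := hMrr
        _ < 1 := hr1
      have h4 : ‖(1:ℂ)‖ ≤ ‖1 + (starRingEnd ℂ) a * M ((r:ℂ))‖ + ‖(starRingEnd ℂ) a * M ((r:ℂ))‖ := by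
        calc ‖(1:ℂ)‖ = ‖(1 + (starRingEnd ℂ) a * M ((r:ℂ))) - (starRingEnd ℂ) a * M ((r:ℂ))‖ := by
              rw [add_sub_cancel_right]
        _ ≤ _ := norm_sub_le _ _
      rw [norm_one] at h4
      linarith
    have hEr_le : ‖E ((r:ℂ))‖ * (1 + r * ‖a‖) ≤ r + ‖a‖ := by
      have h5 : ‖E ((r:ℂ))‖ * (1 + r * ‖a‖) * ‖1 + (starRingEnd ℂ) a * M ((r:ℂ))‖
          ≤ (r + ‖a‖) * ‖1 + (starRingEnd ℂ) a * M ((r:ℂ))‖ := by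
        calc ‖E ((r:ℂ))‖ * (1 + r * ‖a‖) * ‖1 + (starRingEnd ℂ) a * M ((r:ℂ))‖
            = (‖E ((r:ℂ))‖ * ‖1 + (starRingEnd ℂ) a * M ((r:ℂ))‖) * (1 + r * ‖a‖) := by ring
        _ = ‖M ((r:ℂ)) + a‖ * (1 + r * ‖a‖) := by rw [hnorm_eq]
        _ ≤ (r + ‖a‖) * ‖1 + (starRingEnd ℂ) a * M ((r:ℂ))‖ := hmob
      exact le_of_mul_le_mul_right h5 hY
    -- contradiction
    have hEnn : 0 ≤ ‖E ((r:ℂ))‖ := norm_nonneg _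
    have hprod : 0 < 1 + r * ‖a‖ := by nlinarith
    have hmα' : m * (4*(C+1)) ≤ 1 - ‖a‖ := (le_div_iff₀ (by positivity)).mp hmα
    have hxle : 1 + r*‖a‖ - (r + ‖a‖) ≤ (1 - ‖E ((r:ℂ))‖)*(1 + r*‖a‖) := by
      nlinarith only [hEr_le, hprod]
    have k1 : (1 - ‖E ((r:ℂ))‖) * (1 + r*‖a‖) ≤ C*m^2 * (1 + r*‖a‖) :=
      mul_le_mul_of_nonneg_right h1 hprod.le
    have hCm : 0 ≤ C*m^2 := by positivity
    have hra : r * ‖a‖ ≤ 1 := by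
      calc r * ‖a‖ ≤ 1 * 1 := by
            apply mul_le_mul hr1.le hα1 hα0 (by norm_num)
      _ = 1 := by norm_num
    have k2 : C*m^2 * (1 + r*‖a‖) ≤ C*m^2 * 2 := by
      apply mul_le_mul_of_nonneg_left (by linarith) hCm
    have hring : 1 + r*‖a‖ - (r + ‖a‖) = m*(1-‖a‖) := by rw [hrdef]; ring
    have G1 : m * (1-‖a‖) ≤ 2*(C*m^2) := by linarith [hxle, k1, k2, hring]
    have G2 : 1-‖a‖ ≤ 2*C*m := by nlinarith only [G1, hm0]
    nlinarith only [G2, hmα', hm0, hC, mul_pos hm0 hC]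
  -- max modulus: E is constant
  have hmax : IsMaxOn (norm ∘ E) B 0 := by
    intro z hz
    simp only [Function.comp_apply]
    rw [← hadef] at *
    calc ‖E z‖ ≤ 1 := hE1 z hz
    _ = ‖E 0‖ := haone.symm
  have hconst : Set.EqOn E (Function.const ℂ (E 0)) B :=
    Complex.eqOn_of_isPreconnected_of_isMaxOn_norm (convex_ball 0 1).isPreconnected
      isOpen_ball hEdiff h0B hmax
  -- derivative of g vanishes
  have hfderiv : ∀ z ∈ B, fderivWithin ℂ g B z = 0 := by
    intro z hz
    have hEz : E =ᶠ[nhds z] fun _ => E 0 :=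
      Filter.eventuallyEq_of_mem (isOpen_ball.mem_nhds hz) hconst
    have hdE : deriv E z = 0 := by rw [hEz.deriv_eq]; exact deriv_const _ _
    have hgz : DifferentiableAt ℂ g z := hg.differentiableAt (isOpen_ball.mem_nhds hz)
    have hhd : HasDerivAt (fun w => Complex.exp (-(g w))) (Complex.exp (-(g z)) * -(deriv g z)) z :=
      (hgz.hasDerivAt.neg).cexp
    have h0 : Complex.exp (-(g z)) * -(deriv g z) = 0 := by
      rw [← hhd.deriv]
      rw [hEdef] at hdE
      exact hdE
    have hd0 : deriv g z = 0 := by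
      rcases mul_eq_zero.mp h0 with h | h
      · exact absurd h (Complex.exp_ne_zero _)
      · exact neg_eq_zero.mp h
    have h1 : HasDerivAt g 0 z := by rw [← hd0]; exact hgz.hasDerivAt
    have h2 := h1.hasFDerivAt
    have h3 : ContinuousLinearMap.toSpanSingleton ℂ (0:ℂ) = 0 := by ext x; simp
    rw [fderivWithin_of_isOpen isOpen_ball hz, h2.fderiv, h3]
  have hconstg : ∀ z ∈ B, g z = g 0 := fun z hz =>
    (convex_ball (0:ℂ) 1).is_const_of_fderivWithin_eq_zero hg hfderiv hz h0B
  -- limit along the filter to show g 0 = 0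
  have h1cl : (1:ℂ) ∈ closure B := by
    rw [hBdef, closure_ball (0:ℂ) one_ne_zero]
    simp
  have hNB : (nhdsWithin 1 B).NeBot := mem_closure_iff_nhdsWithin_neBot.mp h1cl
  have hev1 : ∀ᶠ z in nhdsWithin 1 B, ‖g 0‖ ≤ C * ‖z - 1‖^2 := by
    have hevB : ∀ᶠ z in nhdsWithin 1 B, z ∈ B := self_mem_nhdsWithin
    have hevd : ∀ᶠ z in nhdsWithin 1 B, dist z 1 < δ :=
      eventually_nhdsWithin_of_eventually_nhds
        (Metric.eventually_nhds_iff.mpr ⟨δ, hδ, fun {y} hy => hy⟩)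
    filter_upwards [hevB, hevd] with z hzB hzd
    rw [← hconstg z hzB]
    exact hbd z hzB hzd
  have hlim : Tendsto (fun z : ℂ => C * ‖z - 1‖^2) (nhdsWithin 1 B) (nhds 0) := by
    have hcont : Continuous (fun z : ℂ => C * ‖z - 1‖^2) := by fun_prop
    have := (hcont.tendsto 1).mono_left (nhdsWithin_le_nhds (s := B))
    simpa using this
  have hg0 : ‖g 0‖ ≤ 0 := ge_of_tendsto hlim hev1
  have hg00 : g 0 = 0 := by
    have := norm_le_zero_iff.mp hg0
    exact this
  intro z hz
  rw [hconstg z hz, hg00]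

open Set in
/-- If a Schur function satisfies `f(z) = z + O((z-1)^4)` as `z → 1` within the disk,
then `f(z) = z` on the disk. -/
theorem stmt0 (f : ℂ → ℂ) (hf : SchurClass f)
    (ho : (fun z => f z - z) =O[nhdsWithin 1 (ball (0 : ℂ) 1)] fun z => (z - 1) ^ 4) :
    ∀ z ∈ ball (0 : ℂ) 1, f z = z := by
  obtain ⟨hd, hb⟩ := hf
  have h1cl : (1:ℂ) ∈ closure (ball (0:ℂ) 1) := by
    rw [closure_ball (0:ℂ) one_ne_zero]; simp
  have hNB : (nhdsWithin 1 (ball (0:ℂ) 1)).NeBot := mem_closure_iff_nhdsWithin_neBot.mp h1cl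
  have hne1 : ∀ z ∈ ball (0:ℂ) 1, z ≠ 1 := by
    intro z hz h
    rw [h, mem_ball_zero_iff] at hz; simp at hz
  have htend4 : Filter.Tendsto (fun z : ℂ => (z-1)^4) (nhdsWithin 1 (ball (0:ℂ) 1)) (nhds 0) := by
    have hcont : Continuous (fun z : ℂ => (z-1)^4) := by fun_prop
    have := (hcont.tendsto 1).mono_left (nhdsWithin_le_nhds (s := ball (0:ℂ) 1))
    simpa using this
  -- strict bound inside the disk
  have hlt : ∀ z ∈ ball (0:ℂ) 1, ‖f z‖ < 1 := by
    by_contra hcon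
    push_neg at hcon
    obtain ⟨z₀, hz₀, hge⟩ := hcon
    have hmax : IsMaxOn (norm ∘ f) (ball (0:ℂ) 1) z₀ := fun x hx => by
      simp only [Function.comp_apply]
      exact le_trans (hb x hx) hge
    have hconst := Complex.eqOn_of_isPreconnected_of_isMaxOn_norm
      (convex_ball (0:ℂ) 1).isPreconnected isOpen_ball hd hz₀ hmax
    have hev : (fun z => f z - z) =ᶠ[nhdsWithin 1 (ball (0:ℂ) 1)] (fun z => f z₀ - z) := by
      filter_upwards [self_mem_nhdsWithin] with z hz
      rw [hconst hz]
      rfl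
    have htend0 : Filter.Tendsto (fun z => f z - z) (nhdsWithin 1 (ball (0:ℂ) 1)) (nhds 0) :=
      ho.trans_tendsto htend4
    have htend0' : Filter.Tendsto (fun z : ℂ => f z₀ - z) (nhdsWithin 1 (ball (0:ℂ) 1)) (nhds 0) :=
      htend0.congr' hev
    have htend1 : Filter.Tendsto (fun z : ℂ => f z₀ - z) (nhdsWithin 1 (ball (0:ℂ) 1))
        (nhds (f z₀ - 1)) := by
      have hcont : Continuous (fun z : ℂ => f z₀ - z) := by fun_prop
      exact (hcont.tendsto 1).mono_left (nhdsWithin_le_nhds (s := ball (0:ℂ) 1))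
    have hfz₀ : f z₀ = 1 := by
      have := tendsto_nhds_unique htend1 htend0'
      linear_combination this
    obtain ⟨c, hc⟩ := ho.bound
    set K := max c 0 with hKdef
    have hK0 : 0 ≤ K := le_max_right _ _
    have hc' : ∀ᶠ z in nhdsWithin 1 (ball (0:ℂ) 1), ‖f z - z‖ ≤ K * ‖z-1‖^4 := by
      filter_upwards [hc] with z hz
      calc ‖f z - z‖ ≤ c * ‖(z-1)^4‖ := hz
      _ ≤ K * ‖z-1‖^4 := by
          rw [norm_pow]
          apply mul_le_mul_of_nonneg_right (le_max_left _ _) (by positivity)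
    have hsmall : ∀ᶠ z in nhdsWithin 1 (ball (0:ℂ) 1), dist z 1 < min 1 (1/(K+1)) := by
      apply eventually_nhdsWithin_of_eventually_nhds
      apply Metric.eventually_nhds_iff.mpr
      exact ⟨min 1 (1/(K+1)), by positivity, fun {y} hy => hy⟩
    obtain ⟨z, hzbd, hzd, hzB⟩ := (hc'.and (hsmall.and self_mem_nhdsWithin)).exists
    set x := ‖z - 1‖ with hxdef
    have hx0 : 0 < x := by
      rw [hxdef, norm_pos_iff, sub_ne_zero]
      exact hne1 z hzB
    have hfz : f z = 1 := by
      have h9 := hconst hzB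
      simp only [Function.const_apply] at h9
      rw [h9, hfz₀]
    have hx1 : x < 1 := lt_of_lt_of_le (by rw [hxdef, ← dist_eq_norm]; exact hzd) (min_le_left _ _)
    have hxK : x * (K+1) < 1 := by
      have h2 : x < 1/(K+1) := lt_of_lt_of_le (by rw [hxdef, ← dist_eq_norm]; exact hzd)
        (min_le_right _ _)
      rw [lt_div_iff₀ (by positivity)] at h2
      exact h2
    have hxle : x ≤ K * x^4 := by
      calc x = ‖f z - z‖ := by rw [hfz]; rw [hxdef]; exact norm_sub_rev z 1
      _ ≤ K * x^4 := hzbd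
    have h3 : (1:ℝ) ≤ K * x^3 := by
      have h4 : x * 1 ≤ x * (K * x^3) := by nlinarith only [hxle]
      exact le_of_mul_le_mul_left h4 hx0
    have hxx : 0 ≤ x - x^3 := by
      nlinarith only [mul_nonneg (mul_nonneg hx0.le (by linarith : (0:ℝ) ≤ 1 - x))
        (by linarith : (0:ℝ) ≤ 1 + x)]
    have h5 : K*x^3 ≤ K*x := by nlinarith only [mul_nonneg hK0 hxx]
    nlinarith only [h3, h5, hxK, hx0]
  have hfz1 : ∀ z ∈ ball (0:ℂ) 1, (1:ℂ) - f z ≠ 0 := by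
    intro z hz h
    have h1 : f z = 1 := by linear_combination -h
    have h2 := hlt z hz
    rw [h1] at h2
    simp at h2
  have h1mz : ∀ z ∈ ball (0:ℂ) 1, (1:ℂ) - z ≠ 0 := by
    intro z hz h
    have : z = 1 := by linear_combination -h
    exact hne1 z hz this
  -- quantitative O bound
  obtain ⟨c, hc⟩ := ho.bound
  set K := max c 1 with hKdef
  have hK1 : 1 ≤ K := le_max_right _ _
  have hc' : ∀ᶠ z in nhdsWithin 1 (ball (0:ℂ) 1), ‖f z - z‖ ≤ K * ‖z-1‖^4 := by
    filter_upwards [hc] with z hz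
    calc ‖f z - z‖ ≤ c * ‖(z-1)^4‖ := hz
    _ ≤ K * ‖z-1‖^4 := by
        rw [norm_pow]
        apply mul_le_mul_of_nonneg_right (le_max_left _ _) (by positivity)
  rw [eventually_nhdsWithin_iff] at hc'
  rw [Metric.eventually_nhds_iff] at hc'
  obtain ⟨δ₀, hδ₀, hKbd⟩ := hc'
  -- the auxiliary function g
  set g : ℂ → ℂ := fun z => (1 + f z)/(1 - f z) - (1 + z)/(1 - z) with hgdef
  have hgdiff : DifferentiableOn ℂ g (ball (0:ℂ) 1) := by
    apply DifferentiableOn.sub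
    · exact DifferentiableOn.div ((differentiableOn_const 1).add hd)
        ((differentiableOn_const 1).sub hd) hfz1
    · exact DifferentiableOn.div ((differentiableOn_const 1).add differentiableOn_id)
        ((differentiableOn_const 1).sub differentiableOn_id) h1mz
  set C : ℝ := 4 * K with hCdef
  have hC : 0 < C := by rw [hCdef]; linarith
  set δ : ℝ := min δ₀ (min 1 (1/(2*K))) with hδdef
  have hδ : 0 < δ := by
    apply lt_min hδ₀
    apply lt_min one_pos
    positivity
  have hbd : ∀ z ∈ ball (0:ℂ) 1, dist z 1 < δ → ‖g z‖ ≤ C * ‖z - 1‖^2 := by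
    intro z hz hdz
    set x := ‖z - 1‖ with hxdef
    have hx0 : 0 < x := by
      rw [hxdef, norm_pos_iff, sub_ne_zero]
      exact hne1 z hz
    have hx1 : x ≤ 1 := by
      have : x < δ := by rw [hxdef, ← dist_eq_norm]; exact hdz
      have h2 : δ ≤ 1 := le_trans (min_le_right _ _) (min_le_left _ _)
      linarith
    have hxK : x * (2*K) ≤ 1 := by
      have h2 : x < 1/(2*K) := by
        have : x < δ := by rw [hxdef, ← dist_eq_norm]; exact hdz
        have h3 : δ ≤ 1/(2*K) := le_trans (min_le_right _ _) (min_le_right _ _)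
        linarith
      rw [lt_div_iff₀ (by positivity)] at h2
      linarith
    have e1 : ‖f z - z‖ ≤ K * x^4 := hKbd (lt_of_lt_of_le hdz (min_le_left _ _)) hz
    have e2 : x/2 ≤ ‖1 - f z‖ := by
      have h4 : ‖(1:ℂ) - z‖ - ‖f z - z‖ ≤ ‖1 - f z‖ := by
        have h5 : (1:ℂ) - f z = (1 - z) - (f z - z) := by ring
        rw [h5]
        exact norm_sub_norm_le _ _
      have h6 : ‖(1:ℂ) - z‖ = x := by rw [hxdef, norm_sub_rev]
      have hxx : 0 ≤ x - x^3 := by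
        nlinarith only [mul_nonneg (mul_nonneg hx0.le (by linarith : (0:ℝ) ≤ 1 - x))
          (by linarith : (0:ℝ) ≤ 1 + x)]
      have h8 : 0 ≤ (1 - x*(2*K)) * x^3 := by
        apply mul_nonneg (by linarith) (by positivity)
      have h7 : K * x^4 ≤ x/2 := by nlinarith only [h8, hxx]
      linarith
    have hgq : g z * ((1 - f z)*(1 - z)) = 2*(f z - z) := by
      have hgz : g z = (1 + f z)/(1 - f z) - (1 + z)/(1 - z) := by rw [hgdef]
      rw [hgz]
      field_simp [hfz1 z hz, h1mz z hz]
      ring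
    have hnormid : ‖g z‖ * (‖1 - f z‖ * ‖1 - z‖) = 2 * ‖f z - z‖ := by
      rw [← norm_mul, ← norm_mul, hgq, norm_mul]
      norm_num
    have h6 : ‖(1:ℂ) - z‖ = x := by rw [hxdef, norm_sub_rev]
    have hD : x/2 * x ≤ ‖1 - f z‖ * ‖1 - z‖ := by
      rw [h6]
      exact mul_le_mul_of_nonneg_right e2 hx0.le
    have hgnn : 0 ≤ ‖g z‖ := norm_nonneg _
    have hstep : ‖g z‖ * (x/2 * x) ≤ (C * x^2) * (x/2 * x) := by
      calc ‖g z‖ * (x/2 * x) ≤ ‖g z‖ * (‖1 - f z‖ * ‖1 - z‖) :=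
            mul_le_mul_of_nonneg_left hD hgnn
      _ = 2 * ‖f z - z‖ := hnormid
      _ ≤ 2 * (K * x^4) := by linarith [e1]
      _ = (C * x^2) * (x/2 * x) := by rw [hCdef]; ring
    exact le_of_mul_le_mul_right hstep (by positivity)
  -- Step A: the real part of g is nonnegative
  have hre : ∀ z ∈ ball (0:ℂ) 1, (-(g z)).re ≤ ((1 + z)/(1 - z)).re := by
    intro z hz
    have h1 : -(g z) = (1 + z)/(1 - z) - (1 + f z)/(1 - f z) := by rw [hgdef]; ring
    rw [h1, Complex.sub_re]
    have h2 : 0 ≤ ((1 + f z)/(1 - f z)).re := re_cayley_nonneg (f z) (hb z hz)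
    linarith
  have hreg := stepA g hgdiff hre C δ hC hδ hbd
  have hgzero := stepB g hgdiff hreg C δ hC hδ hbd
  intro z hz
  have h := hgzero z hz
  rw [hgdef] at h
  have h2 : (1 + f z)/(1 - f z) = (1 + z)/(1 - z) := by
    have := sub_eq_zero.mp h
    exact this
  rw [div_eq_div_iff (hfz1 z hz) (h1mz z hz)] at h2
  linear_combination h2 / 2
end

section
/- For every Schur function w, every n ∈ ℕ, every tuple (z_1, ..., z_n) of points in the open unit disk, and every tuple (k_1, ..., k_n) of positive integers, the block Schwarz-Pick matrix P^w with (i,j)-block having (ℓ,r) entry (1/(ℓ! r!)) ∂^{ℓ+r}/∂z^ℓ ∂\bar{ζ}^r [(1 - w(z)\overline{w(ζ)})/(1 - z\bar{ζ})] evaluated at z = z_i, ζ = z_j, for ℓ = 0,...,k_i - 1 and r = 0,...,k_j - 1, is positive semidefinite. -/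
open Metric Filter
open scoped ComplexOrder

/-- The `(ℓ,r)` entry of the Schwarz–Pick kernel:
`(1/(ℓ! r!)) ∂^{ℓ+r}/∂z^ℓ ∂ζ̄^r [(1 - w(z) conj(w(ζ)))/(1 - z ζ̄)]`.
Since the kernel is holomorphic in `z` and anti-holomorphic in `ζ`, the mixed Wirtinger
derivative is encoded as an iterated complex derivative in `z` and in `u = conj ζ`. -/
noncomputable def pkEntry (w : ℂ → ℂ) (ℓ r : ℕ) (z ζ : ℂ) : ℂ :=
  (1 / ((Nat.factorial ℓ : ℂ) * (Nat.factorial r : ℂ))) *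
    iteratedDeriv ℓ (fun x =>
      iteratedDeriv r (fun u =>
        (1 - w x * (starRingEnd ℂ) (w ((starRingEnd ℂ) u))) / (1 - x * u))
        ((starRingEnd ℂ) ζ)) z

open Complex
open scoped Topology

noncomputable section SPAux

/-- Differentiability of iterated derivatives of a holomorphic function on an open set. -/
lemma diffOn_iteratedDeriv {U : Set ℂ} (hU : IsOpen U) {f : ℂ → ℂ}
    (hf : DifferentiableOn ℂ f U) (n : ℕ) :
    DifferentiableOn ℂ (iteratedDeriv n f) U := by
  induction n generalizing f with
  | zero => simpa [iteratedDeriv_zero] using hf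
  | succ n ih =>
    rw [iteratedDeriv_succ']
    exact ih (((hf.analyticOnNhd hU).deriv).differentiableOn)

lemma itd_add {U : Set ℂ} (hU : IsOpen U) {f g : ℂ → ℂ}
    (hf : DifferentiableOn ℂ f U) (hg : DifferentiableOn ℂ g U) (n : ℕ) :
    ∀ z ∈ U, iteratedDeriv n (fun x => f x + g x) z
      = iteratedDeriv n f z + iteratedDeriv n g z := by
  induction n generalizing f g with
  | zero => intro z _; simp [iteratedDeriv_zero]
  | succ n ih =>
    intro z hz
    have hEq : Set.EqOn (iteratedDeriv n (fun x => f x + g x))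
        (fun x => iteratedDeriv n f x + iteratedDeriv n g x) U := fun x hx => ih hf hg x hx
    rw [iteratedDeriv_succ]
    have : deriv (iteratedDeriv n fun x => f x + g x) z
        = deriv (fun x => iteratedDeriv n f x + iteratedDeriv n g x) z := by
      apply Filter.EventuallyEq.deriv_eq
      filter_upwards [hU.mem_nhds hz] with a ha using hEq ha
    rw [this, deriv_fun_add, iteratedDeriv_succ, iteratedDeriv_succ]
    · exact ((diffOn_iteratedDeriv hU hf n) z hz).differentiableAt (hU.mem_nhds hz)
    · exact ((diffOn_iteratedDeriv hU hg n) z hz).differentiableAt (hU.mem_nhds hz)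

lemma itd_const_mul {U : Set ℂ} (hU : IsOpen U) {f : ℂ → ℂ}
    (hf : DifferentiableOn ℂ f U) (c : ℂ) (n : ℕ) :
    ∀ z ∈ U, iteratedDeriv n (fun x => c * f x) z = c * iteratedDeriv n f z := by
  induction n generalizing f with
  | zero => intro z _; simp [iteratedDeriv_zero]
  | succ n ih =>
    intro z hz
    have hEq : Set.EqOn (iteratedDeriv n (fun x => c * f x))
        (fun x => c * iteratedDeriv n f x) U := fun x hx => ih hf x hx
    rw [iteratedDeriv_succ]
    have : deriv (iteratedDeriv n fun x => c * f x) z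
        = deriv (fun x => c * iteratedDeriv n f x) z := by
      apply Filter.EventuallyEq.deriv_eq
      filter_upwards [hU.mem_nhds hz] with a ha using hEq ha
    rw [this, deriv_const_mul, iteratedDeriv_succ]
    exact ((diffOn_iteratedDeriv hU hf n) z hz).differentiableAt (hU.mem_nhds hz)

lemma itd_sub {U : Set ℂ} (hU : IsOpen U) {f g : ℂ → ℂ}
    (hf : DifferentiableOn ℂ f U) (hg : DifferentiableOn ℂ g U) (n : ℕ) :
    ∀ z ∈ U, iteratedDeriv n (fun x => f x - g x) z
      = iteratedDeriv n f z - iteratedDeriv n g z := by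
  intro z hz
  have h1 : ∀ x, f x - g x = f x + (-1) * g x := by intro x; ring
  simp_rw [h1]
  rw [itd_add hU hf (by simpa using hg.const_mul (-1)) n z hz,
    itd_const_mul hU hg (-1) n z hz]
  ring

/-- A "good family": differentiable on the unit ball with geometric-type summable bounds on
every smaller closed ball. -/
def Good (f : ℕ → ℂ → ℂ) : Prop :=
  (∀ m, DifferentiableOn ℂ (f m) (ball (0:ℂ) 1)) ∧
  (∀ s : ℝ, 0 ≤ s → s < 1 → ∃ u : ℕ → ℝ, Summable u ∧
    ∀ m, ∀ x : ℂ, ‖x‖ ≤ s → ‖f m x‖ ≤ u m)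

lemma good_deriv {f : ℕ → ℂ → ℂ} (hf : Good f) : Good (fun m => deriv (f m)) := by
  obtain ⟨hd, hb⟩ := hf
  constructor
  · intro m
    exact ((hd m).analyticOnNhd isOpen_ball).deriv.differentiableOn
  · intro s hs0 hs1
    set s' : ℝ := (s + 1) / 2 with hs'
    have hss' : s < s' := by rw [hs']; linarith
    have hs'1 : s' < 1 := by rw [hs']; linarith
    have hs'0 : 0 ≤ s' := by linarith
    obtain ⟨u, hu, hub⟩ := hb s' hs'0 hs'1
    set r : ℝ := s' - s with hr
    have hr0 : 0 < r := by simp [hr]; linarith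
    refine ⟨fun m => u m / r, hu.div_const r, ?_⟩
    intro m x hx
    have hsub : closedBall x r ⊆ ball (0:ℂ) 1 := by
      intro y hy
      simp only [mem_closedBall] at hy
      have : ‖y‖ ≤ s' := by
        calc ‖y‖ = ‖y - x + x‖ := by ring_nf
        _ ≤ ‖y - x‖ + ‖x‖ := norm_add_le _ _
        _ ≤ r + s := by
            refine add_le_add ?_ hx
            simpa [dist_eq_norm] using hy
        _ = s' := by rw [hr]; ring
      exact mem_ball_zero_iff.2 (lt_of_le_of_lt this hs'1)
    show ‖deriv (f m) x‖ ≤ u m / r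
    rw [← Complex.cderiv_eq_deriv isOpen_ball (hd m) hr0 hsub]
    refine Complex.norm_cderiv_le hr0 ?_
    intro y hy
    refine hub m y ?_
    have : dist y x = r := by simpa [dist_eq_norm] using hy
    calc ‖y‖ = ‖y - x + x‖ := by ring_nf
    _ ≤ ‖y - x‖ + ‖x‖ := norm_add_le _ _
    _ ≤ r + s := add_le_add (by simpa [dist_eq_norm] using this.le) hx
    _ = s' := by rw [hr]; ring

lemma norm_le_of_mem_ball {z : ℂ} (hz : z ∈ ball (0:ℂ) 1) : ‖z‖ < 1 := by
  simpa [mem_ball_zero_iff] using hz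

lemma good_summable_at {f : ℕ → ℂ → ℂ} (hf : Good f) {z : ℂ} (hz : z ∈ ball (0:ℂ) 1) :
    Summable (fun m => ‖f m z‖) := by
  obtain ⟨u, hu, hub⟩ := hf.2 ‖z‖ (norm_nonneg z) (norm_le_of_mem_ball hz)
  exact hu.of_nonneg_of_le (fun m => norm_nonneg _) (fun m => hub m z le_rfl)

lemma good_hasSum_deriv {f : ℕ → ℂ → ℂ} (hf : Good f) {z : ℂ} (hz : z ∈ ball (0:ℂ) 1) :
    HasSum (fun m => deriv (f m) z) (deriv (fun x => ∑' m, f m x) z) := by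
  obtain ⟨hd, hb⟩ := hf
  have hz1 : ‖z‖ < 1 := norm_le_of_mem_ball hz
  set s' : ℝ := (‖z‖ + 1) / 2 with hs'
  have h1 : ‖z‖ < s' := by rw [hs']; linarith
  have h2 : s' < 1 := by rw [hs']; linarith
  have h0 : 0 ≤ s' := by positivity
  obtain ⟨u, hu, hub⟩ := hb s' h0 h2
  have := hasSum_deriv_of_summable_norm (u := u) (F := f) (U := ball (0:ℂ) s') hu
    (fun m => (hd m).mono (ball_subset_ball h2.le)) isOpen_ball
    (fun m w hw => hub m w (le_of_lt (mem_ball_zero_iff.1 hw)))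
    (mem_ball_zero_iff.2 h1)
  exact this

lemma good_iteratedDeriv {f : ℕ → ℂ → ℂ} (hf : Good f) (n : ℕ) :
    Good (fun m => iteratedDeriv n (f m)) := by
  induction n with
  | zero => simpa [iteratedDeriv_zero] using hf
  | succ n ih => simpa [iteratedDeriv_succ] using good_deriv ih

/-- Differentiability of the sum of a good family. -/
lemma good_differentiableOn_tsum {f : ℕ → ℂ → ℂ} (hf : Good f) :
    DifferentiableOn ℂ (fun x => ∑' m, f m x) (ball (0:ℂ) 1) := by
  intro z hz
  have hz1 : ‖z‖ < 1 := norm_le_of_mem_ball hz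
  set s' : ℝ := (‖z‖ + 1) / 2 with hs'
  have h1 : ‖z‖ < s' := by rw [hs']; linarith
  have h2 : s' < 1 := by rw [hs']; linarith
  have h0 : 0 ≤ s' := by positivity
  obtain ⟨u, hu, hub⟩ := hf.2 s' h0 h2
  have := differentiableOn_tsum_of_summable_norm (u := u) (F := f) (U := ball (0:ℂ) s') hu
    (fun m => (hf.1 m).mono (ball_subset_ball h2.le)) isOpen_ball
    (fun m w hw => hub m w (le_of_lt (mem_ball_zero_iff.1 hw)))
  exact ((this z (mem_ball_zero_iff.2 h1)).differentiableAt
    (isOpen_ball.mem_nhds (mem_ball_zero_iff.2 h1))).differentiableWithinAt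

/-- Termwise iterated differentiation of the sum of a good family. -/
lemma good_iteratedDeriv_tsum {f : ℕ → ℂ → ℂ} (hf : Good f) (n : ℕ) :
    ∀ z ∈ ball (0:ℂ) 1, iteratedDeriv n (fun x => ∑' m, f m x) z
      = ∑' m, iteratedDeriv n (f m) z := by
  induction n generalizing f with
  | zero => intro z _; simp [iteratedDeriv_zero]
  | succ n ih =>
    intro z hz
    rw [iteratedDeriv_succ']
    have hEq : Set.EqOn (deriv (fun x => ∑' m, f m x))
        (fun x => ∑' m, deriv (f m) x) (ball (0:ℂ) 1) := by
      intro x hx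
      exact ((good_hasSum_deriv hf) hx).tsum_eq.symm
    rw [Set.EqOn.iteratedDeriv_of_isOpen hEq isOpen_ball n hz]
    have := ih (good_deriv hf) z hz
    rw [this]
    apply tsum_congr
    intro m
    rw [← iteratedDeriv_succ']

end SPAux

open scoped ComplexConjugate

/-- Anti-holomorphic reflection: derivative transformation. -/
lemma hasDerivAt_conj_comp {g : ℂ → ℂ} {c x : ℂ} (h : HasDerivAt g c (conj x)) :
    HasDerivAt (fun v => conj (g (conj v))) (conj c) x := by
  rw [hasDerivAt_iff_tendsto_slope] at h ⊢
  have hmap : Tendsto (fun v : ℂ => conj v) (𝓝[≠] x) (𝓝[≠] (conj x)) := by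
    rw [tendsto_nhdsWithin_iff]
    constructor
    · exact ((Complex.continuous_conj.tendsto x)).mono_left nhdsWithin_le_nhds
    · filter_upwards [self_mem_nhdsWithin] with v hv
      simp only [Set.mem_compl_iff, Set.mem_singleton_iff] at hv ⊢
      intro hc
      exact hv (by simpa using congrArg conj hc)
  have key : ∀ v : ℂ, slope (fun t => conj (g (conj t))) x v
      = conj (slope g (conj x) (conj v)) := by
    intro v
    simp only [slope, vsub_eq_sub, smul_eq_mul]
    rw [map_mul, map_inv₀, map_sub, map_sub]
    simp
  have : Tendsto (fun v => conj (slope g (conj x) (conj v))) (𝓝[≠] x) (𝓝 (conj c)) :=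
    (Complex.continuous_conj.tendsto c).comp (h.comp hmap)
  exact this.congr (fun v => (key v).symm)

/-- The reflected function `v ↦ conj (f (conj v))` is differentiable on the unit ball. -/
lemma diffOn_conj_comp {f : ℂ → ℂ} (hf : DifferentiableOn ℂ f (ball (0:ℂ) 1)) :
    DifferentiableOn ℂ (fun v => conj (f (conj v))) (ball (0:ℂ) 1) := by
  intro v hv
  have hcv : conj v ∈ ball (0:ℂ) 1 := by
    simpa [mem_ball_zero_iff] using norm_le_of_mem_ball hv
  have hD : DifferentiableAt ℂ f (conj v) :=
    (hf (conj v) hcv).differentiableAt (isOpen_ball.mem_nhds hcv)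
  exact (hasDerivAt_conj_comp hD.hasDerivAt).differentiableAt.differentiableWithinAt

/-- Iterated derivatives of the reflected function. -/
lemma itd_conj_comp {f : ℂ → ℂ} (hf : DifferentiableOn ℂ f (ball (0:ℂ) 1)) (n : ℕ) :
    ∀ u ∈ ball (0:ℂ) 1, iteratedDeriv n (fun v => conj (f (conj v))) u
      = conj (iteratedDeriv n f (conj u)) := by
  induction n generalizing f with
  | zero => intro u _; simp [iteratedDeriv_zero]
  | succ n ih =>
    intro u hu
    have hcu : conj u ∈ ball (0:ℂ) 1 := by
      simpa [mem_ball_zero_iff] using norm_le_of_mem_ball hu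
    rw [iteratedDeriv_succ]
    have hEq : Set.EqOn (iteratedDeriv n (fun v => conj (f (conj v))))
        (fun v => conj (iteratedDeriv n f (conj v))) (ball (0:ℂ) 1) :=
      fun v hv => ih hf v hv
    have h1 : deriv (iteratedDeriv n fun v => conj (f (conj v))) u
        = deriv (fun v => conj (iteratedDeriv n f (conj v))) u := by
      apply Filter.EventuallyEq.deriv_eq
      filter_upwards [isOpen_ball.mem_nhds hu] with a ha using hEq ha
    rw [h1]
    have hD : DifferentiableAt ℂ (iteratedDeriv n f) (conj u) :=
      ((diffOn_iteratedDeriv isOpen_ball hf n) (conj u) hcu).differentiableAt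
        (isOpen_ball.mem_nhds hcu)
    have := hasDerivAt_conj_comp (g := iteratedDeriv n f) hD.hasDerivAt
    rw [this.deriv, ← iteratedDeriv_succ]

section Wseries

variable {w : ℂ → ℂ} (hd : DifferentiableOn ℂ w (ball (0:ℂ) 1))

/-- The Taylor coefficients of `w` at the origin. -/
noncomputable def wcoef (w : ℂ → ℂ) (n : ℕ) : ℂ := (cauchyPowerSeries w 0 (1/2 : NNReal)).coeff n

include hd in
lemma hps_w (ρ : NNReal) (hρ0 : 0 < ρ) (hρ1 : (ρ:ℝ) < 1) :
    HasFPowerSeriesOnBall w (cauchyPowerSeries w 0 ρ) 0 ρ := by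
  refine DifferentiableOn.hasFPowerSeriesOnBall ?_ hρ0
  exact hd.mono (closedBall_subset_ball (by exact_mod_cast hρ1))

include hd in
lemma hps_w_eq (ρ : NNReal) (hρ0 : 0 < ρ) (hρ1 : (ρ:ℝ) < 1) :
    cauchyPowerSeries w 0 ρ = cauchyPowerSeries w 0 (1/2 : NNReal) := by
  refine HasFPowerSeriesAt.eq_formalMultilinearSeries
    (hps_w hd ρ hρ0 hρ1).hasFPowerSeriesAt (hps_w hd (1/2) (by norm_num) (by norm_num)).hasFPowerSeriesAt

include hd in
lemma hasSum_wcoef {x : ℂ} (hx : x ∈ ball (0:ℂ) 1) :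
    HasSum (fun n => wcoef w n * x ^ n) (w x) := by
  have hx1 : ‖x‖ < 1 := norm_le_of_mem_ball hx
  set ρ : NNReal := Real.toNNReal ((‖x‖ + 1)/2) with hρ
  have hρc : (ρ : ℝ) = (‖x‖ + 1)/2 := Real.coe_toNNReal _ (by positivity)
  have hρ0 : 0 < ρ := by
    rw [← NNReal.coe_lt_coe, hρc]; positivity
  have hρ1 : (ρ:ℝ) < 1 := by rw [hρc]; linarith
  have hps := hps_w hd ρ hρ0 hρ1
  have hmem : x ∈ Metric.eball (0:ℂ) ρ := by
    rw [mem_emetric_ball_zero_iff]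
    exact_mod_cast (show (‖x‖₊ : ℝ) < ρ by rw [coe_nnnorm, hρc]; linarith)
  have := hps.hasSum hmem
  simp only [zero_add] at this
  have heq : ∀ n, (cauchyPowerSeries w 0 ρ) n (fun _ => x) = wcoef w n * x ^ n := by
    intro n
    rw [hps_w_eq hd ρ hρ0 hρ1]
    rw [FormalMultilinearSeries.apply_eq_pow_smul_coeff, smul_eq_mul]
    rw [wcoef]; ring
  have hfe : (fun n => (cauchyPowerSeries w 0 ρ) n (fun _ => x)) = fun n => wcoef w n * x ^ n :=
    funext heq
  rwa [hfe] at this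

include hd in
lemma one_le_radius_w : 1 ≤ (cauchyPowerSeries w 0 (1/2 : NNReal)).radius := by
  by_contra hcon
  push_neg at hcon
  obtain ⟨q, hq1, hq2⟩ := ENNReal.lt_iff_exists_nnreal_btwn.1 hcon
  have hbase : ((1/2 : NNReal) : ENNReal) ≤ (cauchyPowerSeries w 0 (1/2 : NNReal)).radius :=
    (hps_w hd (1/2) (by norm_num) (by norm_num)).r_le
  have hq0 : 0 < q := by
    have h12 : ((1/2 : NNReal) : ENNReal) < (q : ENNReal) := lt_of_le_of_lt hbase hq1
    have : (0 : ENNReal) < (q : ENNReal) := lt_of_le_of_lt (zero_le) h12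
    exact_mod_cast this
  have hq1' : (q : ℝ) < 1 := by exact_mod_cast hq2
  have := (hps_w hd q hq0 hq1').r_le
  rw [hps_w_eq hd q hq0 hq1'] at this
  exact (not_le.2 hq1) this

include hd in
lemma summable_wcoef {r : ℝ} (hr0 : 0 ≤ r) (hr1 : r < 1) :
    Summable (fun n => ‖wcoef w n‖ * r ^ n) := by
  set p := cauchyPowerSeries w 0 (1/2 : NNReal)
  have h1 : (Real.toNNReal r : ENNReal) < p.radius :=
    lt_of_lt_of_le (by exact_mod_cast (show Real.toNNReal r < 1 by
      rw [← Real.toNNReal_one]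
      exact (Real.toNNReal_lt_toNNReal_iff (by norm_num)).2 hr1)) (one_le_radius_w hd)
  have h2 := p.summable_norm_mul_pow h1
  refine h2.of_nonneg_of_le (fun n => by positivity) ?_
  intro n
  have hc : ‖wcoef w n‖ ≤ ‖p n‖ := by
    rw [FormalMultilinearSeries.norm_apply_eq_norm_coef]
    exact le_rfl
  have : (Real.toNNReal r : ℝ) = r := Real.coe_toNNReal _ hr0
  rw [this]
  exact mul_le_mul_of_nonneg_right hc (by positivity)

end Wseries

section PKSeries

variable {w : ℂ → ℂ} (hd : DifferentiableOn ℂ w (ball (0:ℂ) 1))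
  (hb : ∀ z ∈ ball (0:ℂ) 1, ‖w z‖ ≤ 1)

/-- Normalized Taylor-type functionals. -/
noncomputable def P1 (m ℓ : ℕ) (z : ℂ) : ℂ :=
  ((Nat.factorial ℓ : ℂ))⁻¹ * iteratedDeriv ℓ (fun x => x ^ m) z

noncomputable def P2 (w : ℂ → ℂ) (m ℓ : ℕ) (z : ℂ) : ℂ :=
  ((Nat.factorial ℓ : ℂ))⁻¹ * iteratedDeriv ℓ (fun x => x ^ m * w x) z

lemma good_pow : Good (fun m (x : ℂ) => x ^ m) := by
  constructor
  · intro m; exact (differentiable_pow m).differentiableOn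
  · intro s hs0 hs1
    refine ⟨fun m => s ^ m, summable_geometric_of_lt_one hs0 hs1, ?_⟩
    intro m x hx
    rw [norm_pow]
    exact pow_le_pow_left₀ (norm_nonneg x) hx m

include hd hb in
lemma good_powW : Good (fun m (x : ℂ) => x ^ m * w x) := by
  constructor
  · intro m
    exact ((differentiable_pow m).differentiableOn).mul hd
  · intro s hs0 hs1
    refine ⟨fun m => s ^ m, summable_geometric_of_lt_one hs0 hs1, ?_⟩
    intro m x hx
    have hxb : x ∈ ball (0:ℂ) 1 := mem_ball_zero_iff.2 (lt_of_le_of_lt hx hs1)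
    rw [norm_mul]
    calc ‖x ^ m‖ * ‖w x‖ ≤ ‖x ^ m‖ * 1 :=
          mul_le_mul_of_nonneg_left (hb x hxb) (norm_nonneg _)
    _ = ‖x‖ ^ m := by rw [mul_one, norm_pow]
    _ ≤ s ^ m := pow_le_pow_left₀ (norm_nonneg x) hx m

include hd hb in
lemma good_powG : Good (fun m (u : ℂ) => u ^ m * conj (w (conj u))) := by
  constructor
  · intro m
    exact ((differentiable_pow m).differentiableOn).mul (diffOn_conj_comp hd)
  · intro s hs0 hs1
    refine ⟨fun m => s ^ m, summable_geometric_of_lt_one hs0 hs1, ?_⟩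
    intro m u hu
    have hub : conj u ∈ ball (0:ℂ) 1 := by
      rw [mem_ball_zero_iff]
      simpa using lt_of_le_of_lt hu hs1
    rw [norm_mul]
    calc ‖u ^ m‖ * ‖conj (w (conj u))‖ ≤ ‖u ^ m‖ * 1 := by
          refine mul_le_mul_of_nonneg_left ?_ (norm_nonneg _)
          simpa using hb _ hub
    _ = ‖u‖ ^ m := by rw [mul_one, norm_pow]
    _ ≤ s ^ m := pow_le_pow_left₀ (norm_nonneg u) hu m

include hd hb in
lemma inner_step {x ζ : ℂ} (hx : x ∈ ball (0:ℂ) 1) (hζ : ζ ∈ ball (0:ℂ) 1) (r : ℕ) :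
    iteratedDeriv r (fun u => (1 - w x * conj (w (conj u))) / (1 - x * u)) (conj ζ)
      = ∑' m : ℕ, (x ^ m * iteratedDeriv r (fun u => u ^ m) (conj ζ)
          - (x ^ m * w x) * iteratedDeriv r (fun u => u ^ m * conj (w (conj u))) (conj ζ)) := by
  have hx1 : ‖x‖ < 1 := norm_le_of_mem_ball hx
  have hζ1 : ‖ζ‖ < 1 := norm_le_of_mem_ball hζ
  have hcζ : conj ζ ∈ ball (0:ℂ) 1 := by rw [mem_ball_zero_iff]; simpa using hζ1
  set g : ℂ → ℂ := fun u => conj (w (conj u)) with hg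
  have hgd : DifferentiableOn ℂ g (ball (0:ℂ) 1) := diffOn_conj_comp hd
  set B : ℕ → ℂ → ℂ := fun m u => x ^ m * u ^ m - (x ^ m * w x) * (u ^ m * g u) with hB
  have goodB : Good B := by
    constructor
    · intro m
      exact (((differentiable_pow m).differentiableOn.const_mul _)).sub
        (((differentiable_pow m).differentiableOn.mul hgd).const_mul _)
    · intro s hs0 hs1
      refine ⟨fun m => 2 * s ^ m, (summable_geometric_of_lt_one hs0 hs1).mul_left 2, ?_⟩
      intro m u hu
      have hub : u ∈ ball (0:ℂ) 1 := mem_ball_zero_iff.2 (lt_of_le_of_lt hu hs1)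
      have hcub : conj u ∈ ball (0:ℂ) 1 := by
        rw [mem_ball_zero_iff]; simpa using lt_of_le_of_lt hu hs1
      have hxm : ‖x ^ m‖ ≤ 1 := by
        rw [norm_pow]; exact pow_le_one₀ (norm_nonneg x) hx1.le
      have hum : ‖u ^ m‖ ≤ s ^ m := by
        rw [norm_pow]; exact pow_le_pow_left₀ (norm_nonneg u) hu m
      have h1 : ‖x ^ m * u ^ m‖ ≤ s ^ m := by
        rw [norm_mul]
        calc ‖x ^ m‖ * ‖u ^ m‖ ≤ 1 * s ^ m :=
          mul_le_mul hxm hum (norm_nonneg _) (by norm_num)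
        _ = s ^ m := one_mul _
      have h2 : ‖(x ^ m * w x) * (u ^ m * g u)‖ ≤ s ^ m := by
        rw [norm_mul, norm_mul, norm_mul]
        have hwx : ‖w x‖ ≤ 1 := hb x hx
        have hgu : ‖g u‖ ≤ 1 := by rw [hg]; simpa using hb _ hcub
        calc ‖x ^ m‖ * ‖w x‖ * (‖u ^ m‖ * ‖g u‖)
            ≤ 1 * 1 * (s ^ m * 1) := by
              refine mul_le_mul (mul_le_mul hxm hwx (norm_nonneg _) (by norm_num))
                (mul_le_mul hum hgu (norm_nonneg _) (by positivity)) (by positivity) (by norm_num)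
        _ = s ^ m := by ring
      calc ‖B m u‖ ≤ ‖x ^ m * u ^ m‖ + ‖(x ^ m * w x) * (u ^ m * g u)‖ := norm_sub_le _ _
      _ ≤ s ^ m + s ^ m := add_le_add h1 h2
      _ = 2 * s ^ m := by ring
  have hEq : Set.EqOn (fun u => (1 - w x * g u) / (1 - x * u))
      (fun u => ∑' m, B m u) (ball (0:ℂ) 1) := by
    intro u hu
    have hu1 : ‖u‖ < 1 := norm_le_of_mem_ball hu
    have hxu : ‖x * u‖ < 1 := by
      rw [norm_mul]
      calc ‖x‖ * ‖u‖ ≤ ‖u‖ := by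
            refine mul_le_of_le_one_left (norm_nonneg u) hx1.le
      _ < 1 := hu1
    have hterm : ∀ m : ℕ, B m u = (x * u) ^ m * (1 - w x * g u) := by
      intro m; rw [hB]; simp only; rw [mul_pow]; ring
    have : (∑' m, B m u) = (∑' m : ℕ, (x * u) ^ m) * (1 - w x * g u) := by
      rw [tsum_congr hterm, tsum_mul_right]
    show (1 - w x * g u) / (1 - x * u) = ∑' m, B m u
    rw [this, tsum_geometric_of_norm_lt_one hxu, div_eq_mul_inv, mul_comm]
  have h1 : iteratedDeriv r (fun u => (1 - w x * g u) / (1 - x * u)) (conj ζ)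
      = iteratedDeriv r (fun u => ∑' m, B m u) (conj ζ) :=
    Set.EqOn.iteratedDeriv_of_isOpen hEq isOpen_ball r hcζ
  rw [h1, good_iteratedDeriv_tsum goodB r (conj ζ) hcζ]
  apply tsum_congr
  intro m
  have hdiff1 : DifferentiableOn ℂ (fun u : ℂ => u ^ m) (ball (0:ℂ) 1) :=
    (differentiable_pow m).differentiableOn
  have hdiff2 : DifferentiableOn ℂ (fun u : ℂ => u ^ m * g u) (ball (0:ℂ) 1) :=
    hdiff1.mul hgd
  have e1 : iteratedDeriv r (B m) (conj ζ)
      = iteratedDeriv r (fun u => x ^ m * u ^ m) (conj ζ)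
        - iteratedDeriv r (fun u => (x ^ m * w x) * (u ^ m * g u)) (conj ζ) :=
    itd_sub isOpen_ball (hdiff1.const_mul _) (hdiff2.const_mul _) r (conj ζ) hcζ
  rw [e1, itd_const_mul isOpen_ball hdiff1 (x ^ m) r (conj ζ) hcζ,
    itd_const_mul isOpen_ball hdiff2 (x ^ m * w x) r (conj ζ) hcζ]

end PKSeries

section PKSeries2

variable {w : ℂ → ℂ} (hd : DifferentiableOn ℂ w (ball (0:ℂ) 1))
  (hb : ∀ z ∈ ball (0:ℂ) 1, ‖w z‖ ≤ 1)

include hd hb in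
lemma pk_series {z ζ : ℂ} (hz : z ∈ ball (0:ℂ) 1) (hζ : ζ ∈ ball (0:ℂ) 1) (ℓ r : ℕ) :
    pkEntry w ℓ r z ζ = ∑' m : ℕ,
      (P1 m ℓ z * conj (P1 m r ζ) - P2 w m ℓ z * conj (P2 w m r ζ)) := by
  have hζ1 : ‖ζ‖ < 1 := norm_le_of_mem_ball hζ
  have hcζ : conj ζ ∈ ball (0:ℂ) 1 := by rw [mem_ball_zero_iff]; simpa using hζ1
  set E1 : ℕ → ℂ := fun m => iteratedDeriv r (fun u => u ^ m) (conj ζ) with hE1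
  set E2 : ℕ → ℂ := fun m => iteratedDeriv r (fun u => u ^ m * conj (w (conj u))) (conj ζ) with hE2
  -- summable bounds for E1, E2
  obtain ⟨u1, hu1s, hu1⟩ := (good_iteratedDeriv good_pow r).2 ‖ζ‖ (norm_nonneg ζ) hζ1
  obtain ⟨u2, hu2s, hu2⟩ := (good_iteratedDeriv (good_powG hd hb) r).2 ‖ζ‖ (norm_nonneg ζ) hζ1
  have hbE1 : ∀ m, ‖E1 m‖ ≤ u1 m := fun m => hu1 m (conj ζ) (by simp)
  have hbE2 : ∀ m, ‖E2 m‖ ≤ u2 m := fun m => hu2 m (conj ζ) (by simp)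
  set C : ℕ → ℂ → ℂ := fun m x => E1 m * x ^ m - E2 m * (x ^ m * w x) with hC
  have goodC : Good C := by
    constructor
    · intro m
      exact ((differentiable_pow m).differentiableOn.const_mul _).sub
        (((differentiable_pow m).differentiableOn.mul hd).const_mul _)
    · intro s hs0 hs1
      refine ⟨fun m => u1 m + u2 m, hu1s.add hu2s, ?_⟩
      intro m x hx
      have hxb : x ∈ ball (0:ℂ) 1 := mem_ball_zero_iff.2 (lt_of_le_of_lt hx hs1)
      have hxm : ‖x ^ m‖ ≤ 1 := by
        rw [norm_pow]
        exact pow_le_one₀ (norm_nonneg x) (le_of_lt (lt_of_le_of_lt hx hs1))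
      have h1 : ‖E1 m * x ^ m‖ ≤ u1 m := by
        rw [norm_mul]
        calc ‖E1 m‖ * ‖x ^ m‖ ≤ u1 m * 1 :=
          mul_le_mul (hbE1 m) hxm (norm_nonneg _) ((norm_nonneg (E1 m)).trans (hbE1 m))
        _ = u1 m := mul_one _
      have h2 : ‖E2 m * (x ^ m * w x)‖ ≤ u2 m := by
        rw [norm_mul, norm_mul]
        have hwx : ‖w x‖ ≤ 1 := hb x hxb
        calc ‖E2 m‖ * (‖x ^ m‖ * ‖w x‖) ≤ u2 m * (1 * 1) := by
              refine mul_le_mul (hbE2 m) ?_ (by positivity)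
                ((norm_nonneg (E2 m)).trans (hbE2 m))
              exact mul_le_mul hxm hwx (norm_nonneg _) (by norm_num)
        _ = u2 m := by ring
      calc ‖C m x‖ ≤ ‖E1 m * x ^ m‖ + ‖E2 m * (x ^ m * w x)‖ := norm_sub_le _ _
      _ ≤ u1 m + u2 m := add_le_add h1 h2
  -- inner function equals the tsum of C on the ball
  have hEqOuter : Set.EqOn
      (fun x => iteratedDeriv r (fun u =>
        (1 - w x * (starRingEnd ℂ) (w ((starRingEnd ℂ) u))) / (1 - x * u)) ((starRingEnd ℂ) ζ))
      (fun x => ∑' m, C m x) (ball (0:ℂ) 1) := by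
    intro x hx
    have := inner_step hd hb hx hζ r
    simp only at this ⊢
    rw [this]
    apply tsum_congr
    intro m
    rw [hC]
    ring
  have step1 : iteratedDeriv ℓ (fun x => iteratedDeriv r (fun u =>
        (1 - w x * (starRingEnd ℂ) (w ((starRingEnd ℂ) u))) / (1 - x * u)) ((starRingEnd ℂ) ζ)) z
      = ∑' m, iteratedDeriv ℓ (C m) z := by
    rw [Set.EqOn.iteratedDeriv_of_isOpen hEqOuter isOpen_ball ℓ hz]
    exact good_iteratedDeriv_tsum goodC ℓ z hz
  have step2 : ∀ m, iteratedDeriv ℓ (C m) z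
      = E1 m * iteratedDeriv ℓ (fun x => x ^ m) z
        - E2 m * iteratedDeriv ℓ (fun x => x ^ m * w x) z := by
    intro m
    have hdiff1 : DifferentiableOn ℂ (fun x : ℂ => x ^ m) (ball (0:ℂ) 1) :=
      (differentiable_pow m).differentiableOn
    have hdiff2 : DifferentiableOn ℂ (fun x : ℂ => x ^ m * w x) (ball (0:ℂ) 1) := hdiff1.mul hd
    rw [hC]
    have e1 := itd_sub isOpen_ball (hdiff1.const_mul (E1 m)) (hdiff2.const_mul (E2 m)) ℓ z hz
    rw [e1, itd_const_mul isOpen_ball hdiff1 (E1 m) ℓ z hz,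
      itd_const_mul isOpen_ball hdiff2 (E2 m) ℓ z hz]
  -- identify E1, E2 with conjugates
  have hE1c : ∀ m, E1 m = conj (iteratedDeriv r (fun t => t ^ m) ζ) := by
    intro m
    have h := itd_conj_comp (f := fun t : ℂ => t ^ m)
      ((differentiable_pow m).differentiableOn) r (conj ζ) hcζ
    have hfun : (fun v : ℂ => conj ((conj v) ^ m)) = fun v : ℂ => v ^ m := by
      funext v; rw [map_pow, Complex.conj_conj]
    rw [hfun] at h
    rw [Complex.conj_conj] at h
    show iteratedDeriv r (fun u => u ^ m) (conj ζ) = conj (iteratedDeriv r (fun t => t ^ m) ζ)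
    exact h
  have hE2c : ∀ m, E2 m = conj (iteratedDeriv r (fun t => t ^ m * w t) ζ) := by
    intro m
    have h := itd_conj_comp (f := fun t : ℂ => t ^ m * w t)
      (((differentiable_pow m).differentiableOn).mul hd) r (conj ζ) hcζ
    have hfun : (fun v : ℂ => conj ((conj v) ^ m * w (conj v)))
        = fun v : ℂ => v ^ m * conj (w (conj v)) := by
      funext v; rw [map_mul, map_pow, Complex.conj_conj]
    rw [hfun] at h
    rw [Complex.conj_conj] at h
    show iteratedDeriv r (fun u => u ^ m * conj (w (conj u))) (conj ζ)
      = conj (iteratedDeriv r (fun t => t ^ m * w t) ζ)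
    exact h
  -- assemble
  rw [pkEntry, step1, ← tsum_mul_left]
  apply tsum_congr
  intro m
  rw [step2 m, hE1c m, hE2c m, P1, P1, P2, P2]
  have hfl : ((Nat.factorial ℓ : ℂ)) ≠ 0 := by
    exact_mod_cast Nat.cast_ne_zero.2 (Nat.factorial_ne_zero ℓ)
  have hfr : ((Nat.factorial r : ℂ)) ≠ 0 := by
    exact_mod_cast Nat.cast_ne_zero.2 (Nat.factorial_ne_zero r)
  simp only [map_mul, map_inv₀, Complex.conj_natCast]
  field_simp

end PKSeries2

section FourierPart

open MeasureTheory AddCircle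

variable {T : ℝ}

lemma norm_fourier_pt (n : ℤ) (t : AddCircle T) : ‖fourier n t‖ = 1 := by
  rw [fourier_apply, Circle.norm_coe]

variable [hT : Fact (0 < T)]

lemma cont_integrable {E : Type*} [NormedAddCommGroup E] {f : AddCircle T → E} (hf : Continuous f) :
    Integrable f haarAddCircle := by
  refine hf.integrable_of_hasCompactSupport ?_
  exact IsCompact.of_isClosed_subset isCompact_univ isClosed_closure (Set.subset_univ _)

lemma integral_fourier_char (m : ℤ) :
    (∫ t : AddCircle T, fourier m t ∂haarAddCircle) = if m = 0 then 1 else 0 := by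
  rcases eq_or_ne m 0 with h | h
  · subst h
    rw [if_pos rfl]
    have : ⇑(@fourier T 0) = (fun _ => 1 : AddCircle T → ℂ) := by ext1; exact fourier_zero
    rw [this, integral_const, probReal_univ, Complex.real_smul,
      Complex.ofReal_one, mul_one]
  · rw [if_neg h]
    exact integral_eq_zero_of_add_right_eq_neg (μ := haarAddCircle)
      (fourier_add_half_inv_index h hT.elim)

lemma cont_char_tsum {ι : Type*} (c : ι → ℂ) (hc : Summable fun k => ‖c k‖) (d : ι → ℤ) :
    Continuous (fun t : AddCircle T => ∑' k, c k * fourier (d k) t) := by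
  refine continuous_tsum (fun k => continuous_const.mul (fourier (d k)).continuous) hc ?_
  intro k t
  rw [norm_mul, norm_fourier_pt, mul_one]

lemma fourierCoeff_char_tsum {ι : Type*} [Countable ι] (c : ι → ℂ)
    (hc : Summable fun k => ‖c k‖) (d : ι → ℤ) (n : ℤ) :
    fourierCoeff (fun t : AddCircle T => ∑' k, c k * fourier (d k) t) n
      = ∑' k, c k * (if d k = n then 1 else 0) := by
  rw [fourierCoeff]
  have h1 : ∀ t : AddCircle T, fourier (-n) t • (∑' k, c k * fourier (d k) t)
      = ∑' k, c k * fourier (d k - n) t := by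
    intro t
    rw [smul_eq_mul, ← tsum_mul_left]
    apply tsum_congr
    intro k
    have : d k - n = -n + d k := by ring
    rw [this, fourier_add]
    ring
  have h2 : (∫ t : AddCircle T, fourier (-n) t • (∑' k, c k * fourier (d k) t) ∂haarAddCircle)
      = ∫ t : AddCircle T, ∑' k, c k * fourier (d k - n) t ∂haarAddCircle := by
    congr 1
    funext t
    exact h1 t
  rw [h2]
  have hint : ∀ k : ι, Integrable (fun t : AddCircle T => c k * fourier (d k - n) t)
      haarAddCircle := by
    intro k
    exact cont_integrable (continuous_const.mul (fourier (d k - n)).continuous)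
  have hnorm : ∀ k : ι, (∫ t : AddCircle T, ‖c k * fourier (d k - n) t‖ ∂haarAddCircle)
      = ‖c k‖ := by
    intro k
    have : (fun t : AddCircle T => ‖c k * fourier (d k - n) t‖) = fun _ => ‖c k‖ := by
      funext t; rw [norm_mul, norm_fourier_pt, mul_one]
    rw [this, integral_const, probReal_univ, one_smul]
  have hsum : Summable fun k : ι => ∫ t : AddCircle T, ‖c k * fourier (d k - n) t‖
      ∂haarAddCircle := by
    refine hc.congr fun k => ?_
    rw [hnorm k]
  rw [← MeasureTheory.integral_tsum_of_summable_integral_norm hint hsum]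
  apply tsum_congr
  intro k
  rw [MeasureTheory.integral_const_mul, integral_fourier_char]
  congr 1
  simp [sub_eq_zero]

lemma parseval_cont (f : C(AddCircle T, ℂ)) :
    Summable (fun i : ℤ => ‖fourierCoeff (⇑f) i‖ ^ 2) ∧
    ∑' i : ℤ, ‖fourierCoeff (⇑f) i‖ ^ 2 = ∫ t, ‖f t‖ ^ 2 ∂haarAddCircle := by
  set g := ContinuousMap.toLp (E := ℂ) 2 haarAddCircle ℂ f with hg
  have hcoeff : ∀ i, fourierCoeff (⇑g : AddCircle T → ℂ) i = fourierCoeff (⇑f) i :=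
    fourierCoeff_toLp f
  constructor
  · have hm := lp.memℓp (fourierBasis.repr g)
    have hs := hm.summable (by norm_num : 0 < (2:ENNReal).toReal)
    refine hs.congr fun i => ?_
    rw [fourierBasis_repr, hcoeff i]
    norm_num
  · have hP := tsum_sq_fourierCoeff g
    have h2 : (∫ t, ‖(⇑g : AddCircle T → ℂ) t‖ ^ 2 ∂haarAddCircle)
        = ∫ t, ‖f t‖ ^ 2 ∂haarAddCircle := by
      apply integral_congr_ae
      filter_upwards [ContinuousMap.coeFn_toLp (p := (2:ENNReal)) haarAddCircle (𝕜 := ℂ) f]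
        with t ht
      rw [ht]
    rw [← h2, ← hP]
    exact tsum_congr fun i => by rw [hcoeff i]

end FourierPart

section FourKey

open MeasureTheory AddCircle

lemma four_key {A U : ℕ → ℂ} (hA : Summable (fun j => ‖A j‖)) (hU : Summable (fun k => ‖U k‖))
    (hW : ∀ t : AddCircle (1:ℝ), ‖∑' j : ℕ, A j * fourier (j:ℤ) t‖ ≤ 1) :
    (Summable fun m : ℕ => ‖∑' j : ℕ, A j * U (m + j)‖ ^ 2) ∧
    ∑' m : ℕ, ‖∑' j : ℕ, A j * U (m + j)‖ ^ 2 ≤ ∑' k : ℕ, ‖U k‖ ^ 2 := by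
  haveI : Fact ((0:ℝ) < 1) := ⟨one_pos⟩
  -- the two continuous functions
  have hUc : Summable (fun k => ‖conj (U k)‖) := by simpa using hU
  have hAc : Summable (fun j => ‖conj (A j)‖) := by simpa using hA
  set c2 : ℕ × ℕ → ℂ := fun p => conj (A p.1) * conj (U p.2) with hc2def
  set d2 : ℕ × ℕ → ℤ := fun p => (p.2 : ℤ) - (p.1 : ℤ) with hd2def
  have hc2 : Summable fun p => ‖c2 p‖ := by
    have h1 : Summable fun p : ℕ × ℕ => ‖A p.1‖ * ‖U p.2‖ :=
      hA.mul_of_nonneg hU (fun j => norm_nonneg _) (fun k => norm_nonneg _)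
    refine h1.congr fun p => ?_
    rw [hc2def]
    simp [norm_mul]
  set F1 : AddCircle (1:ℝ) → ℂ := fun t => ∑' k : ℕ, conj (U k) * fourier ((k:ℕ):ℤ) t with hF1def
  set F2 : AddCircle (1:ℝ) → ℂ := fun t => ∑' p : ℕ × ℕ, c2 p * fourier (d2 p) t with hF2def
  have hF1cont : Continuous F1 := cont_char_tsum _ hUc _
  have hF2cont : Continuous F2 := cont_char_tsum _ hc2 _
  -- F2 = conj (W) * F1 pointwise
  have hF2eq : ∀ t, F2 t = conj (∑' j : ℕ, A j * fourier (j:ℤ) t) * F1 t := by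
    intro t
    have hconj : conj (∑' j : ℕ, A j * fourier (j:ℤ) t)
        = ∑' j : ℕ, conj (A j) * fourier (-(j:ℤ)) t := by
      have h := tsum_star (L := SummationFilter.unconditional ℕ) (f := fun j : ℕ => A j * fourier (j:ℤ) t)
      have h2 : ∀ j : ℕ, star (A j * fourier (j:ℤ) t) = conj (A j) * fourier (-(j:ℤ)) t := by
        intro j
        rw [star_mul']
        rw [show (star (A j) : ℂ) = conj (A j) from rfl,
          show (star (fourier (j:ℤ) t) : ℂ) = conj (fourier (j:ℤ) t) from rfl, ← fourier_neg]
      rw [show (conj (∑' j : ℕ, A j * fourier (j:ℤ) t) : ℂ)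
        = star (∑' j : ℕ, A j * fourier (j:ℤ) t) from rfl, h]
      exact tsum_congr h2
    rw [hconj, hF2def, hF1def]
    have hs1 : Summable fun j : ℕ => ‖conj (A j) * fourier (-(j:ℤ)) t‖ := by
      refine hAc.congr fun j => ?_
      rw [norm_mul, norm_fourier_pt, mul_one]
    have hs2 : Summable fun k : ℕ => ‖conj (U k) * fourier ((k:ℕ):ℤ) t‖ := by
      refine hUc.congr fun k => ?_
      rw [norm_mul, norm_fourier_pt, mul_one]
    rw [tsum_mul_tsum_of_summable_norm hs1 hs2]
    apply tsum_congr
    intro p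
    have : d2 p = -(p.1 : ℤ) + (p.2 : ℤ) := by rw [hd2def]; ring
    rw [this, fourier_add, hc2def]
    ring
  have hF2le : ∀ t, ‖F2 t‖ ≤ ‖F1 t‖ := by
    intro t
    rw [hF2eq t, norm_mul]
    calc ‖conj (∑' j : ℕ, A j * fourier (j:ℤ) t)‖ * ‖F1 t‖ ≤ 1 * ‖F1 t‖ := by
          refine mul_le_mul_of_nonneg_right ?_ (norm_nonneg _)
          rw [RCLike.norm_conj]
          exact hW t
    _ = ‖F1 t‖ := one_mul _
  -- Fourier coefficients of F1
  have hcF1 : ∀ m : ℕ, fourierCoeff F1 (m:ℤ) = conj (U m) := by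
    intro m
    rw [hF1def, fourierCoeff_char_tsum _ hUc _ (m:ℤ)]
    rw [tsum_eq_single m]
    · simp
    · intro k hk
      rw [if_neg (by exact_mod_cast hk), mul_zero]
  have hcF1neg : ∀ n : ℤ, n < 0 → fourierCoeff F1 n = 0 := by
    intro n hn
    rw [hF1def, fourierCoeff_char_tsum _ hUc _ n]
    have : ∀ k : ℕ, conj (U k) * (if ((k:ℕ):ℤ) = n then 1 else 0) = 0 := by
      intro k
      rw [if_neg (by omega), mul_zero]
    rw [tsum_congr this, tsum_zero]
  -- Fourier coefficients of F2
  have hcF2 : ∀ m : ℕ, fourierCoeff F2 (m:ℤ) = ∑' j : ℕ, conj (A j) * conj (U (m + j)) := by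
    intro m
    rw [hF2def, fourierCoeff_char_tsum _ hc2 _ (m:ℤ)]
    refine tsum_eq_tsum_of_ne_zero_bij (fun j => ((j : ℕ), m + (j : ℕ))) ?_ ?_ ?_
    · intro a b hab
      simp only [Prod.mk.injEq] at hab
      exact Subtype.ext hab.1
    · intro p hp
      rw [Function.mem_support] at hp
      have hd : d2 p = (m:ℤ) := by
        by_contra hcon
        exact hp (by simp only [if_neg hcon, mul_zero])
      have hp2 : p.2 = m + p.1 := by
        have h' : (p.2:ℤ) - (p.1:ℤ) = (m:ℤ) := hd
        omega
      have hc2p : c2 p ≠ 0 := fun hcon => hp (by simp only [hcon, zero_mul])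
      have hgne : conj (A p.1) * conj (U (m + p.1)) ≠ 0 := by
        rw [hc2def] at hc2p
        simp only at hc2p
        rw [← hp2]
        exact hc2p
      exact ⟨⟨p.1, Function.mem_support.mpr hgne⟩, Prod.ext rfl hp2.symm⟩
    · intro j
      have hdp : d2 ((j : ℕ), m + (j : ℕ)) = (m : ℤ) := by
        rw [hd2def]
        push_cast
        ring
      rw [if_pos hdp, mul_one, hc2def]
  have hVm : ∀ m : ℕ, ‖fourierCoeff F2 (m:ℤ)‖ = ‖∑' j : ℕ, A j * U (m + j)‖ := by
    intro m
    rw [hcF2 m]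
    have : (∑' j : ℕ, conj (A j) * conj (U (m + j)))
        = conj (∑' j : ℕ, A j * U (m + j)) := by
      rw [show (conj (∑' j : ℕ, A j * U (m + j)) : ℂ)
        = star (∑' j : ℕ, A j * U (m + j)) from rfl, tsum_star]
      exact tsum_congr fun j => by rw [star_mul']; ring_nf; rfl
    rw [this, RCLike.norm_conj]
  -- Parseval for F1
  obtain ⟨hs1, he1⟩ := parseval_cont (⟨F1, hF1cont⟩ : C(AddCircle (1:ℝ), ℂ))
  obtain ⟨hs2, he2⟩ := parseval_cont (⟨F2, hF2cont⟩ : C(AddCircle (1:ℝ), ℂ))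
  simp only [ContinuousMap.coe_mk] at hs1 he1 hs2 he2
  have hF1val : ∑' i : ℤ, ‖fourierCoeff F1 i‖ ^ 2 = ∑' k : ℕ, ‖U k‖ ^ 2 := by
    refine tsum_eq_tsum_of_ne_zero_bij (fun k => ((k : ℕ) : ℤ)) ?_ ?_ ?_
    · intro a b hab
      simp only at hab
      exact Subtype.ext (by exact_mod_cast hab)
    · intro n hn
      rw [Function.mem_support] at hn
      have hn0 : 0 ≤ n := by
        by_contra hcon
        push_neg at hcon
        rw [hcF1neg n hcon] at hn
        simp at hn
      have hval : fourierCoeff F1 n = conj (U n.toNat) := by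
        have := hcF1 n.toNat
        rwa [Int.toNat_of_nonneg hn0] at this
      refine ⟨⟨n.toNat, ?_⟩, by simp [Int.toNat_of_nonneg hn0]⟩
      rw [Function.mem_support]
      intro hcon
      rw [hval] at hn
      apply hn
      rw [show ‖conj (U n.toNat)‖ = ‖U n.toNat‖ from RCLike.norm_conj _]
      rw [show ‖U n.toNat‖ ^ 2 = 0 from by rw [← hcon]]
    · intro k
      rw [hcF1 k, RCLike.norm_conj]
  -- chain of inequalities
  have hinj : Function.Injective (fun m : ℕ => ((m:ℕ):ℤ)) := by
    intro a b hab
    simp only at hab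
    exact_mod_cast hab
  have hsnat : Summable fun m : ℕ => ‖fourierCoeff F2 ((m:ℕ):ℤ)‖ ^ 2 :=
    hs2.comp_injective hinj
  have hmono : ∑' m : ℕ, ‖fourierCoeff F2 ((m:ℕ):ℤ)‖ ^ 2 ≤ ∑' i : ℤ, ‖fourierCoeff F2 i‖ ^ 2 := by
    refine Summable.tsum_le_tsum_of_inj (fun m : ℕ => ((m:ℕ):ℤ)) hinj
      (fun c _ => by positivity) (fun m => le_rfl) ?_ hs2
    exact hsnat
  have hint : ∫ t, ‖F2 t‖ ^ 2 ∂haarAddCircle ≤ ∫ t, ‖F1 t‖ ^ 2 ∂haarAddCircle := by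
    refine integral_mono ?_ ?_ ?_
    · exact cont_integrable ((hF2cont.norm).pow 2)
    · exact cont_integrable ((hF1cont.norm).pow 2)
    · intro t
      exact pow_le_pow_left₀ (norm_nonneg _) (hF2le t) 2
  constructor
  · exact hsnat.congr fun m => by rw [hVm m]
  calc ∑' m : ℕ, ‖∑' j : ℕ, A j * U (m + j)‖ ^ 2
      = ∑' m : ℕ, ‖fourierCoeff F2 ((m:ℕ):ℤ)‖ ^ 2 := tsum_congr fun m => by rw [hVm m]
  _ ≤ ∑' i : ℤ, ‖fourierCoeff F2 i‖ ^ 2 := hmono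
  _ = ∫ t, ‖F2 t‖ ^ 2 ∂haarAddCircle := he2
  _ ≤ ∫ t, ‖F1 t‖ ^ 2 ∂haarAddCircle := hint
  _ = ∑' i : ℤ, ‖fourierCoeff F1 i‖ ^ 2 := he1.symm
  _ = ∑' k : ℕ, ‖U k‖ ^ 2 := hF1val

end FourKey

section Assemble

open scoped BigOperators

lemma sq_summable {a : ℕ → ℂ} (h : Summable fun m => ‖a m‖) :
    Summable fun m => ‖a m‖ ^ 2 := by
  have hB : ∀ m, ‖a m‖ ≤ ∑' k, ‖a k‖ := fun m => Summable.le_tsum h m (fun k _ => norm_nonneg _)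
  refine (h.mul_left (∑' k, ‖a k‖)).of_nonneg_of_le (fun m => by positivity) ?_
  intro m
  rw [pow_two]
  exact mul_le_mul_of_nonneg_right (hB m) (norm_nonneg _)

lemma summable_mul_conj {a b : ℕ → ℂ} (ha : Summable fun m => ‖a m‖)
    (hb : Summable fun m => ‖b m‖) : Summable fun m => a m * conj (b m) := by
  refine Summable.of_norm ?_
  have hB : ∀ m, ‖b m‖ ≤ ∑' k, ‖b k‖ := fun m => Summable.le_tsum hb m (fun k _ => norm_nonneg _)
  refine (ha.mul_left (∑' k, ‖b k‖)).of_nonneg_of_le (fun m => by positivity) ?_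
  intro m
  rw [norm_mul, RCLike.norm_conj, mul_comm]
  exact mul_le_mul_of_nonneg_right (hB m) (norm_nonneg _)

lemma norm_fact_inv_le (ℓ : ℕ) : ‖((Nat.factorial ℓ : ℂ))⁻¹‖ ≤ 1 := by
  rw [norm_inv, Complex.norm_natCast]
  rw [inv_le_one₀ (by exact_mod_cast Nat.factorial_pos ℓ)]
  exact_mod_cast Nat.one_le_iff_ne_zero.mpr (Nat.factorial_ne_zero ℓ)

variable {ι : Type*} [Fintype ι] {w : ℂ → ℂ}
  (hd : DifferentiableOn ℂ w (ball (0:ℂ) 1))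
  (hb : ∀ z ∈ ball (0:ℂ) 1, ‖w z‖ ≤ 1)
  (pt : ι → ℂ) (ord : ι → ℕ) (c : ι → ℂ)

/-- The `U` sequence: the test functional applied to monomials. -/
noncomputable def Useq (m : ℕ) : ℂ := ∑ p : ι, conj (c p) * P1 m (ord p) (pt p)

/-- The `V` sequence: the test functional applied to `x^m * w x`. -/
noncomputable def Vseq (w : ℂ → ℂ) (m : ℕ) : ℂ := ∑ p : ι, conj (c p) * P2 w m (ord p) (pt p)

variable (hpt : ∀ p, pt p ∈ ball (0:ℂ) 1)

include hpt in
lemma summable_normU : Summable (fun m => ‖Useq pt ord c m‖) := by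
  have h : ∀ p : ι, ∃ u : ℕ → ℝ, Summable u ∧
      ∀ m, ‖conj (c p) * P1 m (ord p) (pt p)‖ ≤ u m := by
    intro p
    obtain ⟨u, hu, hub⟩ := (good_iteratedDeriv good_pow (ord p)).2 ‖pt p‖ (norm_nonneg _)
      (norm_le_of_mem_ball (hpt p))
    refine ⟨fun m => ‖c p‖ * u m, hu.mul_left _, fun m => ?_⟩
    rw [norm_mul, RCLike.norm_conj]
    refine mul_le_mul_of_nonneg_left ?_ (norm_nonneg _)
    rw [P1, norm_mul]
    calc ‖((Nat.factorial (ord p) : ℂ))⁻¹‖ * ‖iteratedDeriv (ord p) (fun x => x ^ m) (pt p)‖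
        ≤ 1 * u m := by
          refine mul_le_mul (norm_fact_inv_le _) (hub m (pt p) le_rfl) (norm_nonneg _) one_pos.le
    _ = u m := one_mul _
  choose uf hufs hufb using h
  have hsum : Summable (fun m => ∑ p : ι, uf p m) := summable_sum (fun p _ => hufs p)
  refine hsum.of_nonneg_of_le (fun m => norm_nonneg _) (fun m => ?_)
  calc ‖Useq pt ord c m‖ ≤ ∑ p : ι, ‖conj (c p) * P1 m (ord p) (pt p)‖ := norm_sum_le _ _
  _ ≤ ∑ p : ι, uf p m := Finset.sum_le_sum (fun p _ => hufb p m)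

include hd hb hpt in
lemma summable_normV : Summable (fun m => ‖Vseq pt ord c w m‖) := by
  have h : ∀ p : ι, ∃ u : ℕ → ℝ, Summable u ∧
      ∀ m, ‖conj (c p) * P2 w m (ord p) (pt p)‖ ≤ u m := by
    intro p
    obtain ⟨u, hu, hub⟩ := (good_iteratedDeriv (good_powW hd hb) (ord p)).2 ‖pt p‖ (norm_nonneg _)
      (norm_le_of_mem_ball (hpt p))
    refine ⟨fun m => ‖c p‖ * u m, hu.mul_left _, fun m => ?_⟩
    rw [norm_mul, RCLike.norm_conj]
    refine mul_le_mul_of_nonneg_left ?_ (norm_nonneg _)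
    rw [P2, norm_mul]
    calc ‖((Nat.factorial (ord p) : ℂ))⁻¹‖ *
        ‖iteratedDeriv (ord p) (fun x => x ^ m * w x) (pt p)‖
        ≤ 1 * u m := by
          refine mul_le_mul (norm_fact_inv_le _) (hub m (pt p) le_rfl) (norm_nonneg _) one_pos.le
    _ = u m := one_mul _
  choose uf hufs hufb using h
  have hsum : Summable (fun m => ∑ p : ι, uf p m) := summable_sum (fun p _ => hufs p)
  refine hsum.of_nonneg_of_le (fun m => norm_nonneg _) (fun m => ?_)
  calc ‖Vseq pt ord c w m‖ ≤ ∑ p : ι, ‖conj (c p) * P2 w m (ord p) (pt p)‖ := norm_sum_le _ _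
  _ ≤ ∑ p : ι, uf p m := Finset.sum_le_sum (fun p _ => hufb p m)

include hd in
lemma good_afam (m : ℕ) : Good (fun j (x : ℂ) => wcoef w j * x ^ (m + j)) := by
  constructor
  · intro j
    exact (differentiable_pow (m + j)).differentiableOn.const_mul _
  · intro s hs0 hs1
    refine ⟨fun j => ‖wcoef w j‖ * s ^ j, summable_wcoef hd hs0 hs1, ?_⟩
    intro j x hx
    rw [norm_mul, norm_pow]
    refine mul_le_mul_of_nonneg_left ?_ (norm_nonneg _)
    calc ‖x‖ ^ (m + j) ≤ s ^ (m + j) := pow_le_pow_left₀ (norm_nonneg x) hx _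
    _ ≤ s ^ j := pow_le_pow_of_le_one hs0 hs1.le (by omega)

include hd in
lemma P2_eq_tsum {z : ℂ} (hz : z ∈ ball (0:ℂ) 1) (m ℓ : ℕ) :
    P2 w m ℓ z = ∑' j : ℕ, wcoef w j * P1 (m + j) ℓ z := by
  have hEq : Set.EqOn (fun x : ℂ => ∑' j : ℕ, wcoef w j * x ^ (m + j))
      (fun x => x ^ m * w x) (ball (0:ℂ) 1) := by
    intro x hx
    have h1 : ∀ j : ℕ, wcoef w j * x ^ (m + j) = x ^ m * (wcoef w j * x ^ j) := by
      intro j; rw [pow_add]; ring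
    simp only
    rw [tsum_congr h1, tsum_mul_left, (hasSum_wcoef hd hx).tsum_eq]
  rw [P2]
  rw [← Set.EqOn.iteratedDeriv_of_isOpen hEq isOpen_ball ℓ hz]
  rw [good_iteratedDeriv_tsum (good_afam hd m) ℓ z hz]
  rw [← tsum_mul_left]
  apply tsum_congr
  intro j
  rw [itd_const_mul isOpen_ball (differentiable_pow (m + j)).differentiableOn (wcoef w j) ℓ z hz]
  rw [P1]
  ring

include hd hpt in
lemma V_eq_tsum (m : ℕ) :
    Vseq pt ord c w m = ∑' j : ℕ, wcoef w j * Useq pt ord c (m + j) := by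
  have hsum_p : ∀ p : ι, Summable (fun j : ℕ => conj (c p) * (wcoef w j * P1 (m + j) (ord p) (pt p))) := by
    intro p
    obtain ⟨u, hu, hub⟩ := (good_iteratedDeriv (good_afam hd m) (ord p)).2 ‖pt p‖ (norm_nonneg _)
      (norm_le_of_mem_ball (hpt p))
    refine Summable.of_norm ((hu.mul_left ‖c p‖).of_nonneg_of_le (fun j => norm_nonneg _) ?_)
    intro j
    rw [norm_mul, RCLike.norm_conj]
    refine mul_le_mul_of_nonneg_left ?_ (norm_nonneg _)
    rw [P1]
    have h2 : wcoef w j * (((Nat.factorial (ord p) : ℂ))⁻¹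
        * iteratedDeriv (ord p) (fun x => x ^ (m + j)) (pt p))
        = ((Nat.factorial (ord p) : ℂ))⁻¹
          * (wcoef w j * iteratedDeriv (ord p) (fun x => x ^ (m + j)) (pt p)) := by ring
    rw [h2, norm_mul]
    have h3 : wcoef w j * iteratedDeriv (ord p) (fun x => x ^ (m + j)) (pt p)
        = iteratedDeriv (ord p) (fun x => wcoef w j * x ^ (m + j)) (pt p) :=
      (itd_const_mul isOpen_ball (differentiable_pow (m + j)).differentiableOn _ _ _ (hpt p)).symm
    rw [h3]
    calc ‖((Nat.factorial (ord p) : ℂ))⁻¹‖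
        * ‖iteratedDeriv (ord p) (fun x => wcoef w j * x ^ (m + j)) (pt p)‖
        ≤ 1 * u j :=
          mul_le_mul (norm_fact_inv_le _) (hub j (pt p) le_rfl) (norm_nonneg _) one_pos.le
    _ = u j := one_mul _
  have h1 : Vseq pt ord c w m
      = ∑ p : ι, ∑' j : ℕ, conj (c p) * (wcoef w j * P1 (m + j) (ord p) (pt p)) := by
    rw [Vseq]
    apply Finset.sum_congr rfl
    intro p _
    rw [P2_eq_tsum hd (hpt p) m (ord p), ← tsum_mul_left]
  rw [h1, ← Summable.tsum_finsetSum (fun p _ => hsum_p p)]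
  apply tsum_congr
  intro j
  rw [Useq, Finset.mul_sum]
  apply Finset.sum_congr rfl
  intro p _
  ring

end Assemble

section Assemble2

open scoped BigOperators

variable {ι : Type*} [Fintype ι] {w : ℂ → ℂ}
  (hd : DifferentiableOn ℂ w (ball (0:ℂ) 1))
  (hb : ∀ z ∈ ball (0:ℂ) 1, ‖w z‖ ≤ 1)
  (pt : ι → ℂ) (ord : ι → ℕ) (c : ι → ℂ)
  (hpt : ∀ p, pt p ∈ ball (0:ℂ) 1)

include hd in
lemma hW_bound {ρ : ℝ} (h0 : 0 ≤ ρ) (h1 : ρ < 1)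
    (hbw : ∀ z ∈ ball (0:ℂ) 1, ‖w z‖ ≤ 1) :
    ∀ t : AddCircle (1:ℝ), ‖∑' j : ℕ, (wcoef w j * (ρ:ℂ) ^ j) * fourier ((j:ℕ):ℤ) t‖ ≤ 1 := by
  intro t
  induction t using QuotientAddGroup.induction_on with
  | H x =>
    set y : ℂ := (ρ:ℂ) * Complex.exp (2 * Real.pi * Complex.I * x) with hy
    have hyn : ‖y‖ = ρ := by
      rw [hy, norm_mul]
      have : (2 * Real.pi * Complex.I * x) = ((2 * Real.pi * x : ℝ) : ℂ) * Complex.I := by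
        push_cast; ring
      rw [this]
      rw [Complex.norm_exp_ofReal_mul_I, mul_one]
      simpa using h0
    have hyball : y ∈ ball (0:ℂ) 1 := mem_ball_zero_iff.2 (by rw [hyn]; exact h1)
    have hterm : ∀ j : ℕ, (wcoef w j * (ρ:ℂ) ^ j) * fourier ((j:ℕ):ℤ) (x : AddCircle (1:ℝ))
        = wcoef w j * y ^ j := by
      intro j
      rw [fourier_coe_apply]
      have harg : 2 * Real.pi * Complex.I * (((j:ℕ):ℤ):ℂ) * (x:ℂ) / ((1:ℝ):ℂ)
          = (j:ℕ) * (2 * Real.pi * Complex.I * x) := by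
        push_cast
        ring
      rw [harg, Complex.exp_nat_mul, hy, mul_pow]
      ring
    rw [tsum_congr hterm, (hasSum_wcoef hd hyball).tsum_eq]
    exact hbw y hyball

include hd hpt in
lemma aP1_bound (m : ℕ) (p : ι) : ∃ u : ℕ → ℝ, Summable u ∧
    ∀ j, ‖conj (c p) * (wcoef w j * P1 (m + j) (ord p) (pt p))‖ ≤ ‖c p‖ * u j := by
  obtain ⟨u, hu, hub⟩ := (good_iteratedDeriv (good_afam hd m) (ord p)).2 ‖pt p‖ (norm_nonneg _)
    (norm_le_of_mem_ball (hpt p))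
  refine ⟨u, hu, fun j => ?_⟩
  rw [norm_mul, RCLike.norm_conj]
  refine mul_le_mul_of_nonneg_left ?_ (norm_nonneg _)
  rw [P1]
  have h2 : wcoef w j * (((Nat.factorial (ord p) : ℂ))⁻¹
      * iteratedDeriv (ord p) (fun x => x ^ (m + j)) (pt p))
      = ((Nat.factorial (ord p) : ℂ))⁻¹
        * (wcoef w j * iteratedDeriv (ord p) (fun x => x ^ (m + j)) (pt p)) := by ring
  rw [h2, norm_mul]
  have h3 : wcoef w j * iteratedDeriv (ord p) (fun x => x ^ (m + j)) (pt p)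
      = iteratedDeriv (ord p) (fun x => wcoef w j * x ^ (m + j)) (pt p) :=
    (itd_const_mul isOpen_ball (differentiable_pow (m + j)).differentiableOn _ _ _ (hpt p)).symm
  rw [h3]
  calc ‖((Nat.factorial (ord p) : ℂ))⁻¹‖
      * ‖iteratedDeriv (ord p) (fun x => wcoef w j * x ^ (m + j)) (pt p)‖
      ≤ 1 * u j :=
        mul_le_mul (norm_fact_inv_le _) (hub j (pt p) le_rfl) (norm_nonneg _) one_pos.le
  _ = u j := one_mul _

include hd hpt in
lemma aU_majorant (m : ℕ) : ∃ D : ℕ → ℝ, Summable D ∧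
    ∀ j : ℕ, ‖wcoef w j * Useq pt ord c (m + j)‖ ≤ D j := by
  have h := fun p : ι => aP1_bound hd pt ord c hpt m p
  choose uf hufs hufb using h
  refine ⟨fun j => ∑ p : ι, ‖c p‖ * uf p j, summable_sum (fun p _ => (hufs p).mul_left _), ?_⟩
  intro j
  have he : wcoef w j * Useq pt ord c (m + j)
      = ∑ p : ι, conj (c p) * (wcoef w j * P1 (m + j) (ord p) (pt p)) := by
    rw [Useq, Finset.mul_sum]
    exact Finset.sum_congr rfl (fun p _ => by ring)
  rw [he]
  calc ‖∑ p : ι, conj (c p) * (wcoef w j * P1 (m + j) (ord p) (pt p))‖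
      ≤ ∑ p : ι, ‖conj (c p) * (wcoef w j * P1 (m + j) (ord p) (pt p))‖ := norm_sum_le _ _
  _ ≤ ∑ p : ι, ‖c p‖ * uf p j := Finset.sum_le_sum (fun p _ => hufb p j)

include hd hb hpt in
lemma tsum_V2_le_U2 :
    ∑' m : ℕ, ‖Vseq pt ord c w m‖ ^ 2 ≤ ∑' m : ℕ, ‖Useq pt ord c m‖ ^ 2 := by
  have hUs : Summable fun m => ‖Useq pt ord c m‖ := summable_normU pt ord c hpt
  have hVs : Summable fun m => ‖Vseq pt ord c w m‖ := summable_normV hd hb pt ord c hpt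
  have hV2 : Summable fun m => ‖Vseq pt ord c w m‖ ^ 2 := sq_summable hVs
  have hρ_bound : ∀ ρ : ℝ, 0 ≤ ρ → ρ < 1 →
      (Summable fun m : ℕ => ‖∑' j : ℕ, (wcoef w j * (ρ:ℂ) ^ j) * Useq pt ord c (m + j)‖ ^ 2) ∧
      ∑' m : ℕ, ‖∑' j : ℕ, (wcoef w j * (ρ:ℂ) ^ j) * Useq pt ord c (m + j)‖ ^ 2
        ≤ ∑' m : ℕ, ‖Useq pt ord c m‖ ^ 2 := by
    intro ρ h0 h1
    refine four_key ?_ hUs (hW_bound hd h0 h1 hb)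
    refine (summable_wcoef hd h0 h1).congr fun j => ?_
    rw [norm_mul, norm_pow, Complex.norm_real, Real.norm_of_nonneg h0]
  have hlim : ∀ m : ℕ,
      Tendsto (fun ρ : ℝ => ∑' j : ℕ, (wcoef w j * (ρ:ℂ) ^ j) * Useq pt ord c (m + j))
        (nhdsWithin (1:ℝ) (Set.Iio 1)) (nhds (Vseq pt ord c w m)) := by
    intro m
    obtain ⟨D, hDs, hDb⟩ := aU_majorant hd pt ord c hpt m
    rw [V_eq_tsum hd pt ord c hpt m]
    refine tendsto_tsum_of_dominated_convergence hDs ?_ ?_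
    · intro j
      have h1 : Tendsto (fun ρ : ℝ => ((ρ:ℂ))) (nhdsWithin (1:ℝ) (Set.Iio 1)) (nhds 1) := by
        have := (Complex.continuous_ofReal.tendsto 1).mono_left
          (nhdsWithin_le_nhds (s := Set.Iio (1:ℝ)))
        simpa using this
      have h2 : Tendsto (fun ρ : ℝ => (wcoef w j * (ρ:ℂ) ^ j) * Useq pt ord c (m + j))
          (nhdsWithin (1:ℝ) (Set.Iio 1))
          (nhds ((wcoef w j * (1:ℂ) ^ j) * Useq pt ord c (m + j))) :=
        (((h1.pow j).const_mul (wcoef w j)).mul_const _)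
      simpa using h2
    · filter_upwards [Ioo_mem_nhdsLT_of_mem (show (1:ℝ) ∈ Set.Ioc 0 1 from ⟨zero_lt_one, le_rfl⟩)]
        with ρ hρ j
      have hρn : ‖((ρ:ℝ):ℂ) ^ j‖ ≤ 1 := by
        rw [norm_pow, Complex.norm_real, Real.norm_of_nonneg hρ.1.le]
        exact pow_le_one₀ hρ.1.le hρ.2.le
      calc ‖(wcoef w j * (ρ:ℂ) ^ j) * Useq pt ord c (m + j)‖
          = ‖(ρ:ℂ) ^ j‖ * ‖wcoef w j * Useq pt ord c (m + j)‖ := by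
            rw [← norm_mul]; congr 1; ring
      _ ≤ 1 * ‖wcoef w j * Useq pt ord c (m + j)‖ :=
            mul_le_mul_of_nonneg_right hρn (norm_nonneg _)
      _ = ‖wcoef w j * Useq pt ord c (m + j)‖ := one_mul _
      _ ≤ D j := hDb j
  refine Summable.tsum_le_of_sum_le hV2 (fun s => ?_)
  have h1 : Tendsto
      (fun ρ : ℝ => ∑ m ∈ s, ‖∑' j : ℕ, (wcoef w j * (ρ:ℂ) ^ j) * Useq pt ord c (m + j)‖ ^ 2)
      (nhdsWithin (1:ℝ) (Set.Iio 1)) (nhds (∑ m ∈ s, ‖Vseq pt ord c w m‖ ^ 2)) :=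
    tendsto_finset_sum s (fun m _ => ((hlim m).norm.pow 2))
  refine le_of_tendsto h1 ?_
  filter_upwards [Ioo_mem_nhdsLT_of_mem (show (1:ℝ) ∈ Set.Ioc 0 1 from ⟨zero_lt_one, le_rfl⟩)]
    with ρ hρ
  obtain ⟨hsum, hle⟩ := hρ_bound ρ hρ.1.le hρ.2
  calc ∑ m ∈ s, ‖∑' j : ℕ, (wcoef w j * (ρ:ℂ) ^ j) * Useq pt ord c (m + j)‖ ^ 2
      ≤ ∑' m : ℕ, ‖∑' j : ℕ, (wcoef w j * (ρ:ℂ) ^ j) * Useq pt ord c (m + j)‖ ^ 2 :=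
        Summable.sum_le_tsum s (fun m _ => by positivity) hsum
  _ ≤ ∑' m : ℕ, ‖Useq pt ord c m‖ ^ 2 := hle

end Assemble2

section Final

open scoped BigOperators ComplexOrder

variable {ι : Type*} [Fintype ι] {w : ℂ → ℂ}
  (hd : DifferentiableOn ℂ w (ball (0:ℂ) 1))
  (hb : ∀ z ∈ ball (0:ℂ) 1, ‖w z‖ ≤ 1)

include hd hb in
lemma pk_conj {z ζ : ℂ} (hz : z ∈ ball (0:ℂ) 1) (hζ : ζ ∈ ball (0:ℂ) 1) (ℓ r : ℕ) :
    conj (pkEntry w r ℓ ζ z) = pkEntry w ℓ r z ζ := by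
  rw [pk_series hd hb hζ hz, pk_series hd hb hz hζ]
  rw [show (conj (∑' m : ℕ, (P1 m r ζ * conj (P1 m ℓ z) - P2 w m r ζ * conj (P2 w m ℓ z))) : ℂ)
    = star (∑' m : ℕ, (P1 m r ζ * conj (P1 m ℓ z) - P2 w m r ζ * conj (P2 w m ℓ z))) from rfl,
    tsum_star]
  apply tsum_congr
  intro m
  simp only [star_sub, star_mul']
  rw [show (star (conj (P1 m ℓ z)) : ℂ) = P1 m ℓ z from Complex.conj_conj _,
    show (star (conj (P2 w m ℓ z)) : ℂ) = P2 w m ℓ z from Complex.conj_conj _]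
  rw [show (star (P1 m r ζ) : ℂ) = conj (P1 m r ζ) from rfl,
    show (star (P2 w m r ζ) : ℂ) = conj (P2 w m r ζ) from rfl]
  ring

variable (pt : ι → ℂ) (ord : ι → ℕ) (c : ι → ℂ) (hpt : ∀ p, pt p ∈ ball (0:ℂ) 1)

include hpt in
lemma summable_normP1 (p : ι) :
    Summable (fun m => ‖conj (c p) * P1 m (ord p) (pt p)‖) := by
  obtain ⟨u, hu, hub⟩ := (good_iteratedDeriv good_pow (ord p)).2 ‖pt p‖ (norm_nonneg _)
    (norm_le_of_mem_ball (hpt p))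
  refine (hu.mul_left ‖c p‖).of_nonneg_of_le (fun m => norm_nonneg _) (fun m => ?_)
  rw [norm_mul, RCLike.norm_conj]
  refine mul_le_mul_of_nonneg_left ?_ (norm_nonneg _)
  rw [P1, norm_mul]
  calc ‖((Nat.factorial (ord p) : ℂ))⁻¹‖ * ‖iteratedDeriv (ord p) (fun x => x ^ m) (pt p)‖
      ≤ 1 * u m :=
        mul_le_mul (norm_fact_inv_le _) (hub m (pt p) le_rfl) (norm_nonneg _) one_pos.le
  _ = u m := one_mul _

include hd hb hpt in
lemma summable_normP2 (p : ι) :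
    Summable (fun m => ‖conj (c p) * P2 w m (ord p) (pt p)‖) := by
  obtain ⟨u, hu, hub⟩ := (good_iteratedDeriv (good_powW hd hb) (ord p)).2 ‖pt p‖ (norm_nonneg _)
    (norm_le_of_mem_ball (hpt p))
  refine (hu.mul_left ‖c p‖).of_nonneg_of_le (fun m => norm_nonneg _) (fun m => ?_)
  rw [norm_mul, RCLike.norm_conj]
  refine mul_le_mul_of_nonneg_left ?_ (norm_nonneg _)
  rw [P2, norm_mul]
  calc ‖((Nat.factorial (ord p) : ℂ))⁻¹‖
      * ‖iteratedDeriv (ord p) (fun x => x ^ m * w x) (pt p)‖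
      ≤ 1 * u m :=
        mul_le_mul (norm_fact_inv_le _) (hub m (pt p) le_rfl) (norm_nonneg _) one_pos.le
  _ = u m := one_mul _

include hd hb hpt in
lemma key_quadratic :
    0 ≤ ∑ p : ι, ∑ q : ι, conj (c p) * pkEntry w (ord p) (ord q) (pt p) (pt q) * c q := by
  have hUs : Summable fun m => ‖Useq pt ord c m‖ := summable_normU pt ord c hpt
  have hVs : Summable fun m => ‖Vseq pt ord c w m‖ := summable_normV hd hb pt ord c hpt
  have hU2 : Summable fun m => ‖Useq pt ord c m‖ ^ 2 := sq_summable hUs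
  have hV2 : Summable fun m => ‖Vseq pt ord c w m‖ ^ 2 := sq_summable hVs
  -- termwise summand and its summability
  set f : ι → ι → ℕ → ℂ := fun p q m =>
    (conj (c p) * P1 m (ord p) (pt p)) * conj (conj (c q) * P1 m (ord q) (pt q))
    - (conj (c p) * P2 w m (ord p) (pt p)) * conj (conj (c q) * P2 w m (ord q) (pt q)) with hf
  have hfs : ∀ p q : ι, Summable (f p q) := by
    intro p q
    exact (summable_mul_conj (summable_normP1 pt ord c hpt p) (summable_normP1 pt ord c hpt q)).sub
      (summable_mul_conj (summable_normP2 hd hb pt ord c hpt p)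
        (summable_normP2 hd hb pt ord c hpt q))
  have hterm : ∀ p q : ι, conj (c p) * pkEntry w (ord p) (ord q) (pt p) (pt q) * c q
      = ∑' m : ℕ, f p q m := by
    intro p q
    rw [pk_series hd hb (hpt p) (hpt q)]
    rw [← tsum_mul_left, ← tsum_mul_right]
    apply tsum_congr
    intro m
    rw [hf]
    simp only [map_mul, Complex.conj_conj]
    ring
  have hswap : ∑ p : ι, ∑ q : ι, conj (c p) * pkEntry w (ord p) (ord q) (pt p) (pt q) * c q
      = ∑' m : ℕ, ∑ p : ι, ∑ q : ι, f p q m := by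
    rw [Finset.sum_congr rfl (fun p _ => Finset.sum_congr rfl (fun q _ => hterm p q))]
    have h1 : ∀ p : ι, ∑ q : ι, ∑' m : ℕ, f p q m = ∑' m : ℕ, ∑ q : ι, f p q m :=
      fun p => (Summable.tsum_finsetSum (fun q _ => hfs p q)).symm
    rw [Finset.sum_congr rfl (fun p _ => h1 p),
      ← Summable.tsum_finsetSum (fun p _ => summable_sum (fun q _ => hfs p q))]
  have hfactor : ∀ m : ℕ, ∑ p : ι, ∑ q : ι, f p q m
      = ((‖Useq pt ord c m‖ ^ 2 - ‖Vseq pt ord c w m‖ ^ 2 : ℝ) : ℂ) := by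
    intro m
    have h1 : ∑ p : ι, ∑ q : ι, f p q m
        = (∑ p : ι, conj (c p) * P1 m (ord p) (pt p))
            * conj (∑ q : ι, conj (c q) * P1 m (ord q) (pt q))
          - (∑ p : ι, conj (c p) * P2 w m (ord p) (pt p))
            * conj (∑ q : ι, conj (c q) * P2 w m (ord q) (pt q)) := by
      rw [map_sum, map_sum, Finset.sum_mul_sum, Finset.sum_mul_sum, ← Finset.sum_sub_distrib]
      apply Finset.sum_congr rfl
      intro p _
      rw [← Finset.sum_sub_distrib]
    rw [h1]
    rw [show (∑ p : ι, conj (c p) * P1 m (ord p) (pt p)) = Useq pt ord c m from rfl,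
      show (∑ p : ι, conj (c p) * P2 w m (ord p) (pt p)) = Vseq pt ord c w m from rfl]
    rw [Complex.mul_conj, Complex.mul_conj]
    rw [Complex.normSq_eq_norm_sq, Complex.normSq_eq_norm_sq]
    push_cast
    ring
  rw [hswap, tsum_congr hfactor, ← Complex.ofReal_tsum]
  rw [Complex.zero_le_real]
  rw [Summable.tsum_sub hU2 hV2]
  have := tsum_V2_le_U2 hd hb pt ord c hpt
  linarith

end Final

/-- For every Schur function the (block) Schwarz–Pick matrix at points of the disk is
positive semidefinite. -/
theorem stmt4 (w : ℂ → ℂ) (hw : SchurClass w) (n : ℕ)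
    (z : Fin n → ℂ) (hz : ∀ i, z i ∈ ball (0 : ℂ) 1)
    (k : Fin n → ℕ) (hk : ∀ i, 0 < k i) :
    (Matrix.of fun p q : (Σ i : Fin n, Fin (k i)) =>
      pkEntry w (p.2 : ℕ) (q.2 : ℕ) (z p.1) (z q.1)).PosSemidef := by
  obtain ⟨hd, hb⟩ := hw
  rw [Matrix.posSemidef_iff_dotProduct_mulVec]
  constructor
  · unfold Matrix.IsHermitian
    ext p q
    rw [Matrix.conjTranspose_apply, Matrix.of_apply, Matrix.of_apply]
    exact pk_conj hd hb (hz p.1) (hz q.1) (p.2 : ℕ) (q.2 : ℕ)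
  · intro x
    have hQ := key_quadratic hd hb (fun p : (Σ i : Fin n, Fin (k i)) => z p.1)
      (fun p => (p.2 : ℕ)) x (fun p => hz p.1)
    have hform : dotProduct (star x)
        (Matrix.mulVec (Matrix.of fun p q : (Σ i : Fin n, Fin (k i)) =>
        pkEntry w (p.2 : ℕ) (q.2 : ℕ) (z p.1) (z q.1)) x)
        = ∑ p : (Σ i : Fin n, Fin (k i)), ∑ q : (Σ i : Fin n, Fin (k i)),
            conj (x p) * pkEntry w (p.2 : ℕ) (q.2 : ℕ) (z p.1) (z q.1) * x q := by
      rw [dotProduct]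
      apply Finset.sum_congr rfl
      intro p _
      rw [Matrix.mulVec, dotProduct, Finset.mul_sum]
      apply Finset.sum_congr rfl
      intro q _
      rw [Matrix.of_apply]
      rw [show ((star x) p : ℂ) = conj (x p) from rfl]
      ring
    rw [hform]
    exact hQ
end

section
/- Let w(z) = w(0) + z C (I - zA)^{-1} B with U = [[A, B], [C, w(0)]] a coisometry on H ⊕ ℂ. Then for all nonnegative integers ℓ, r and all z, ζ in the unit disk, (1/(ℓ! r!)) ∂^{ℓ+r}/∂z^ℓ ∂\bar{ζ}^r [(1 - w(z)\overline{w(ζ)})/(1 - z\bar{ζ})] = C A^ℓ (I - zA)^{-ℓ-1} (I - \bar{ζ} A*)^{-r-1} (A*)^r C*. -/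
open Metric ContinuousLinearMap

section helpers

set_option linter.unusedSectionVars false

variable {R : Type*} [NormedRing R] [NormedAlgebra ℂ R] [CompleteSpace R]
variable {F : Type*} [NormedAddCommGroup F] [NormedSpace ℂ F]

lemma isUnit_oneSub {T : R} (hT : ‖T‖ ≤ 1) {x : ℂ} (hx : ‖x‖ < 1) :
    IsUnit (1 - x • T) := by
  apply isUnit_one_sub_of_norm_lt_one
  calc ‖x • T‖ = ‖x‖ * ‖T‖ := norm_smul x T
  _ ≤ ‖x‖ * 1 := by nlinarith [norm_nonneg x]
  _ < 1 := by simpa using hx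

lemma commute_inv_oneSub (T : R) (x : ℂ) :
    Commute T (Ring.inverse (1 - x • T)) := by
  by_cases h : IsUnit (1 - x • T)
  · obtain ⟨u, hu⟩ := h
    rw [← hu, Ring.inverse_unit]
    apply Commute.units_inv_right
    rw [hu]
    exact (Commute.one_right T).sub_right ((Commute.refl T).smul_right x)
  · rw [Ring.inverse_non_unit _ h]; exact Commute.zero_right T

lemma hasDerivAt_inv_oneSub {T : R} (hT : ‖T‖ ≤ 1) {x : ℂ} (hx : ‖x‖ < 1) :
    HasDerivAt (fun y : ℂ => Ring.inverse (1 - y • T))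
      (T * (Ring.inverse (1 - x • T)) ^ 2) x := by
  have hn : ‖x • T‖ < 1 := by
    calc ‖x • T‖ = ‖x‖ * ‖T‖ := norm_smul x T
    _ ≤ ‖x‖ * 1 := by nlinarith [norm_nonneg x]
    _ < 1 := by simpa using hx
  set u : Rˣ := Units.oneSub (x • T) hn with hu
  have huval : (u : R) = 1 - x • T := rfl
  have hinv : ((u⁻¹ : Rˣ) : R) = Ring.inverse (1 - x • T) := by
    rw [← huval, Ring.inverse_unit]
  have h1 : HasDerivAt (fun y : ℂ => 1 - y • T) (-T) x := by
    have := ((hasDerivAt_id x).smul_const T).const_sub (1 : R)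
    simpa using this
  have hF : HasFDerivAt Ring.inverse (-(mulLeftRight ℂ R ↑u⁻¹ ↑u⁻¹)) (1 - x • T) :=
    huval ▸ hasFDerivAt_ringInverse (𝕜 := ℂ) u
  have h2 := hF.comp_hasDerivAt x h1
  convert h2 using 1
  · rfl
  · rfl
  have hc := (commute_inv_oneSub T x).eq
  simp only [ContinuousLinearMap.neg_apply, mulLeftRight_apply, hinv]
  rw [mul_neg, neg_mul, neg_neg, sq, ← mul_assoc, hc]

lemma hasDerivAt_pow_inv_oneSub {T : R} (hT : ‖T‖ ≤ 1) {x : ℂ} (hx : ‖x‖ < 1) (m : ℕ) :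
    HasDerivAt (fun y : ℂ => (Ring.inverse (1 - y • T)) ^ m)
      ((m : ℂ) • (T * (Ring.inverse (1 - x • T)) ^ (m + 1))) x := by
  induction m with
  | zero => simpa using hasDerivAt_const x (1 : R)
  | succ m ih =>
    have h := ih.mul (hasDerivAt_inv_oneSub hT hx)
    have hfun : (fun y : ℂ => (Ring.inverse (1 - y • T)) ^ (m + 1))
        = fun y : ℂ => (Ring.inverse (1 - y • T)) ^ m * Ring.inverse (1 - y • T) := by
      funext y; rw [pow_succ]
    rw [hfun]
    convert h using 1
    · rfl
    set f := Ring.inverse (1 - x • T) with hf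
    have hc : Commute T f := commute_inv_oneSub T x
    push_cast
    rw [add_smul, one_smul, smul_mul_assoc, mul_assoc, ← pow_succ]
    congr 1
    rw [← mul_assoc, ← (hc.pow_right m).eq, mul_assoc, ← pow_add]

lemma iteratedDeriv_comp_inv_oneSub {T : R} (hT : ‖T‖ ≤ 1) (Φ : R →L[ℂ] F) (n : ℕ) :
    ∀ x : ℂ, ‖x‖ < 1 →
    iteratedDeriv n (fun y : ℂ => Φ (Ring.inverse (1 - y • T))) x
      = (n.factorial : ℂ) • Φ (T ^ n * (Ring.inverse (1 - x • T)) ^ (n + 1)) := by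
  induction n with
  | zero => intro x hx; simp
  | succ n ih =>
    intro x hx
    rw [iteratedDeriv_succ]
    have hev : (iteratedDeriv n (fun y : ℂ => Φ (Ring.inverse (1 - y • T))))
        =ᶠ[nhds x] fun y =>
          (n.factorial : ℂ) • Φ (T ^ n * (Ring.inverse (1 - y • T)) ^ (n + 1)) := by
      filter_upwards [Metric.ball_mem_nhds x (show (0:ℝ) < 1 - ‖x‖ by linarith)] with y hy
      apply ih
      have h1 : dist y x < 1 - ‖x‖ := hy
      rw [dist_eq_norm] at h1
      linarith [norm_sub_norm_le y x]
    rw [hev.deriv_eq]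
    have hD : HasDerivAt (fun y : ℂ =>
        (n.factorial : ℂ) • Φ (T ^ n * (Ring.inverse (1 - y • T)) ^ (n + 1)))
        ((n.factorial : ℂ) • Φ (T ^ n * (((n : ℂ) + 1) •
          (T * (Ring.inverse (1 - x • T)) ^ (n + 1 + 1))))) x := by
      have hp := hasDerivAt_pow_inv_oneSub hT hx (n + 1)
      have h3 := ((Φ.comp ((ContinuousLinearMap.mul ℂ R) (T ^ n))).hasFDerivAt.comp_hasDerivAt
        x hp).const_smul ((n.factorial : ℂ))
      simp at h3
      convert h3 using 1
      funext y
      simp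
      rw [mul_smul_comm, map_smul]
    rw [hD.deriv]
    rw [mul_smul_comm, map_smul, smul_smul]
    congr 1
    · push_cast [Nat.factorial_succ]; ring
    · congr 1
      rw [← mul_assoc, ← pow_succ]

end helpers

section main

variable {H : Type*} [NormedAddCommGroup H] [InnerProductSpace ℂ H] [CompleteSpace H]

lemma norm_adjoint_le_one (A : H →L[ℂ] H) (B : ℂ →L[ℂ] H)
    (hU11 : A ∘L adjoint A + B ∘L adjoint B = 1) : ‖adjoint A‖ ≤ 1 := by
  refine opNorm_le_bound _ zero_le_one fun ξ => ?_
  rw [one_mul]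
  have happ : A ((adjoint A) ξ) + B ((adjoint B) ξ) = ξ := by
    have := congrArg (fun T : H →L[ℂ] H => T ξ) hU11
    simpa using this
  have h2 : (inner ℂ ξ (A ((adjoint A) ξ)) : ℂ) + inner ℂ ξ (B ((adjoint B) ξ)) = inner ℂ ξ ξ := by
    rw [← inner_add_right, happ]
  rw [← adjoint_inner_left A, ← adjoint_inner_left B] at h2
  rw [inner_self_eq_norm_sq_to_K, inner_self_eq_norm_sq_to_K, inner_self_eq_norm_sq_to_K] at h2
  have h3 : ‖(adjoint A) ξ‖ ^ 2 + ‖(adjoint B) ξ‖ ^ 2 = ‖ξ‖ ^ 2 := by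
    exact_mod_cast h2
  nlinarith [norm_nonneg ((adjoint A) ξ), norm_nonneg ((adjoint B) ξ), norm_nonneg ξ]

end main

section key

variable {H : Type*} [NormedAddCommGroup H] [InnerProductSpace ℂ H] [CompleteSpace H]

lemma C_apply_eq_inner (C : H →L[ℂ] ℂ) (v : H) : C v = (inner ℂ ((adjoint C) 1) v : ℂ) := by
  have h := adjoint_inner_left C v 1
  rw [RCLike.inner_apply] at h
  simp only [starRingEnd_apply, star_one, one_mul, mul_one] at h
  exact h.symm

lemma adjB_apply_eq_inner (B : ℂ →L[ℂ] H) (ξ : H) :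
    (adjoint B) ξ = (inner ℂ (B 1) ξ : ℂ) := by
  have h := adjoint_inner_left B 1 ξ
  rw [RCLike.inner_apply, one_mul] at h
  have h2 := congrArg (starRingEnd ℂ) h
  simpa [inner_conj_symm] using h2

set_option maxHeartbeats 1000000 in
lemma key_identity (w : ℂ → ℂ) (A : H →L[ℂ] H) (B : ℂ →L[ℂ] H) (C : H →L[ℂ] ℂ)
    (hreal : ∀ z ∈ ball (0 : ℂ) 1,
      w z = w 0 + z * C ((Ring.inverse (1 - z • A)) (B 1)))
    (hU11 : A ∘L adjoint A + B ∘L adjoint B = 1)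
    (hU12 : A ∘L adjoint C + (starRingEnd ℂ) (w 0) • B = 0)
    (hU21 : C ∘L adjoint A + w 0 • adjoint B = 0)
    (hU22 : C ∘L adjoint C + (w 0 * (starRingEnd ℂ) (w 0)) • (1 : ℂ →L[ℂ] ℂ) = 1)
    {x u : ℂ} (hx : ‖x‖ < 1) (hu : ‖u‖ < 1) :
    1 - w x * (starRingEnd ℂ) (w ((starRingEnd ℂ) u)) =
      (1 - x * u) * C ((Ring.inverse (1 - x • A))
        ((Ring.inverse (1 - u • adjoint A)) ((adjoint C) 1))) := by
  have hA'le : ‖adjoint A‖ ≤ 1 := norm_adjoint_le_one A B hU11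
  have hAle : ‖A‖ ≤ 1 := by
    have h := hA'le; rwa [← star_eq_adjoint, norm_star] at h
  set c : H := (adjoint C) 1 with hc
  set b : H := B 1 with hb
  set w0 : ℂ := w 0 with hw0
  set Rx : H →L[ℂ] H := Ring.inverse (1 - x • A) with hRx
  set S : H →L[ℂ] H := Ring.inverse (1 - u • adjoint A) with hS
  set p : H := S c with hp
  have hUx : IsUnit (1 - x • A) := isUnit_oneSub hAle hx
  have hUu : IsUnit (1 - u • adjoint A) := isUnit_oneSub hA'le hu
  -- vector identity : c = p - u • (adjoint A p)
  have hc_eq : c = p - u • (adjoint A p) := by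
    have h1 : ((1 - u • adjoint A) * S) c = c := by
      rw [Ring.mul_inverse_cancel _ hUu]; simp
    calc c = ((1 - u • adjoint A) * S) c := h1.symm
    _ = p - u • (adjoint A p) := by
        simp [ContinuousLinearMap.mul_apply, sub_apply, smul_apply, hp]
  -- vector identity : ∀ v, v = Rx v - x • Rx (A v)
  have hRv : ∀ v : H, v = Rx v - x • Rx (A v) := by
    intro v
    have h1 : (Rx * (1 - x • A)) v = v := by
      rw [hRx, Ring.inverse_mul_cancel _ hUx]; simp
    calc v = (Rx * (1 - x • A)) v := h1.symm
    _ = Rx v - x • Rx (A v) := by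
        simp [ContinuousLinearMap.mul_apply, sub_apply, smul_apply]
  have hBz : ∀ z : ℂ, B z = z • b := by
    intro z
    rw [hb, ← map_smul, smul_eq_mul, mul_one]
  -- realization formulas
  have hwx : w x = w0 + x * C (Rx b) := by
    have h := hreal x (mem_ball_zero_iff.mpr hx)
    rwa [← hRx] at h
  have hwu : (starRingEnd ℂ) (w ((starRingEnd ℂ) u)) =
      (starRingEnd ℂ) w0 + u * (adjoint B) p := by
    have hcu : ‖(starRingEnd ℂ) u‖ < 1 := by rwa [RCLike.norm_conj]
    have h1 := hreal _ (mem_ball_zero_iff.mpr hcu)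
    rw [h1, map_add, map_mul, Complex.conj_conj]
    congr 1
    have hstar : adjoint (Ring.inverse (1 - (starRingEnd ℂ) u • A)) = S := by
      rw [← star_eq_adjoint, ← Ring.inverse_star, hS]
      congr 1
      rw [star_sub, star_one, star_smul, star_eq_adjoint]
      simp [Complex.star_def, Complex.conj_conj]
    rw [C_apply_eq_inner C, ← hc, inner_conj_symm, ← adjoint_inner_right, hstar, ← hp,
      adjB_apply_eq_inner B, ← hb]
  -- scalar equations
  have E4 : C c + w0 * (starRingEnd ℂ) w0 = 1 := by
    have h := congrArg (fun T : ℂ →L[ℂ] ℂ => T 1) hU22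
    simpa using h
  have E1 : C c = C p - u * C (adjoint A p) := by
    rw [hc_eq, map_sub, map_smul, smul_eq_mul]
  have E2 : w0 * (adjoint B p) = -(C (adjoint A p)) := by
    have h := congrArg (fun T : H →L[ℂ] ℂ => T p) hU21
    simp only [add_apply, comp_apply, smul_apply, smul_eq_mul, zero_apply] at h
    linear_combination h
  have E3 : (adjoint B p) * C (Rx b) = C (Rx p) - C (Rx (A (adjoint A p))) := by
    have h := congrArg (fun T : H →L[ℂ] H => T p) hU11
    simp only [add_apply, comp_apply, one_apply] at h
    rw [hBz] at h
    have h2 : (adjoint B p) • b = p - A (adjoint A p) := by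
      apply eq_sub_of_add_eq; rw [add_comm]; exact h
    calc (adjoint B p) * C (Rx b) = C (Rx ((adjoint B p) • b)) := by
          rw [map_smul, map_smul, smul_eq_mul]
    _ = C (Rx (p - A (adjoint A p))) := by rw [h2]
    _ = C (Rx p) - C (Rx (A (adjoint A p))) := by rw [map_sub, map_sub]
  have E5 : (starRingEnd ℂ) w0 * C (Rx b) = -(C (Rx (A c))) := by
    have h := congrArg (fun T : ℂ →L[ℂ] H => T 1) hU12
    simp only [add_apply, comp_apply, smul_apply, zero_apply] at h
    have h2 : (starRingEnd ℂ) w0 • b = -(A c) := by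
      apply eq_neg_of_add_eq_zero_left; rw [add_comm]; rw [← hc, ← hb] at h; exact h
    calc (starRingEnd ℂ) w0 * C (Rx b) = C (Rx ((starRingEnd ℂ) w0 • b)) := by
          rw [map_smul, map_smul, smul_eq_mul]
    _ = C (Rx (-(A c))) := by rw [h2]
    _ = -(C (Rx (A c))) := by rw [map_neg, map_neg]
  have E6 : C p = C (Rx p) - x * C (Rx (A p)) := by
    conv_lhs => rw [hRv p]
    simp [map_sub, map_smul, smul_eq_mul]
  have E7 : C (Rx (A c)) = C (Rx (A p)) - u * C (Rx (A (adjoint A p))) := by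
    rw [hc_eq]
    simp [map_sub, map_smul, smul_eq_mul]
  rw [hwx, hwu]
  linear_combination (-1 : ℂ) * E4 + E1 - u * E2 - x * u * E3 - x * E5 + E6 + x * E7

end key

set_option maxHeartbeats 1000000 in
/-- Given a coisometric realization `w(z) = w(0) + z C (I - zA)^{-1} B`
(the block operator `[[A, B], [C, w(0)]]` on `H ⊕ ℂ` satisfies `U U* = I`,
written blockwise), for all `ℓ, r ≥ 0` and `z, ζ` in the disk,
`(1/(ℓ! r!)) ∂^{ℓ+r}/∂z^ℓ ∂ζ̄^r [(1 - w(z) conj(w(ζ)))/(1 - z ζ̄)]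
  = C A^ℓ (I - zA)^{-ℓ-1} (I - ζ̄ A*)^{-r-1} (A*)^r C*`.
The mixed Wirtinger derivative is encoded as an iterated complex derivative in `z`
and in the anti-holomorphic variable `u = conj ζ`. -/
theorem stmt6 {H : Type*} [NormedAddCommGroup H] [InnerProductSpace ℂ H] [CompleteSpace H]
    (w : ℂ → ℂ) (A : H →L[ℂ] H) (B : ℂ →L[ℂ] H) (C : H →L[ℂ] ℂ)
    (hreal : ∀ z ∈ ball (0 : ℂ) 1,
      w z = w 0 + z * C ((Ring.inverse (1 - z • A)) (B 1)))
    (hU11 : A ∘L adjoint A + B ∘L adjoint B = 1)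
    (hU12 : A ∘L adjoint C + (starRingEnd ℂ) (w 0) • B = 0)
    (hU21 : C ∘L adjoint A + w 0 • adjoint B = 0)
    (hU22 : C ∘L adjoint C + (w 0 * (starRingEnd ℂ) (w 0)) • (1 : ℂ →L[ℂ] ℂ) = 1) :
    ∀ ℓ r : ℕ, ∀ z ∈ ball (0 : ℂ) 1, ∀ ζ ∈ ball (0 : ℂ) 1,
      (1 / ((Nat.factorial ℓ : ℂ) * (Nat.factorial r : ℂ))) *
        iteratedDeriv ℓ (fun x =>
          iteratedDeriv r (fun u =>
            (1 - w x * (starRingEnd ℂ) (w ((starRingEnd ℂ) u))) / (1 - x * u))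
            ((starRingEnd ℂ) ζ)) z =
      C ((A ^ ℓ * (Ring.inverse (1 - z • A)) ^ (ℓ + 1) *
          (Ring.inverse (1 - ((starRingEnd ℂ) ζ) • adjoint A)) ^ (r + 1) *
          (adjoint A) ^ r) ((adjoint C) 1)) := by
  intro ℓ r z hz ζ hζ
  rw [mem_ball_zero_iff] at hz hζ
  have hA'le : ‖adjoint A‖ ≤ 1 := norm_adjoint_le_one A B hU11
  have hAle : ‖A‖ ≤ 1 := by
    have h := hA'le; rwa [← star_eq_adjoint, norm_star] at h
  set u0 : ℂ := (starRingEnd ℂ) ζ with hu0def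
  have hu0 : ‖u0‖ < 1 := by rw [hu0def, RCLike.norm_conj]; exact hζ
  set c : H := (adjoint C) 1 with hc
  set A' : H →L[ℂ] H := adjoint A with hA'
  have hxu_ne : ∀ {x u : ℂ}, ‖x‖ < 1 → ‖u‖ < 1 → (1 : ℂ) - x * u ≠ 0 := by
    intro x u hx hu h
    have h2 : ‖x * u‖ < 1 := by
      rw [norm_mul]; nlinarith [norm_nonneg x, norm_nonneg u]
    rw [sub_eq_zero] at h
    rw [← h] at h2; simp at h2
  have step1 : ∀ x : ℂ, ‖x‖ < 1 →
      iteratedDeriv r (fun u =>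
          (1 - w x * (starRingEnd ℂ) (w ((starRingEnd ℂ) u))) / (1 - x * u)) u0
      = (r.factorial : ℂ) * C ((Ring.inverse (1 - x • A))
          ((A' ^ r * (Ring.inverse (1 - u0 • A')) ^ (r + 1)) c)) := by
    intro x hx
    set Rx : H →L[ℂ] H := Ring.inverse (1 - x • A) with hRxd
    set Φ : (H →L[ℂ] H) →L[ℂ] ℂ :=
      (C.comp Rx).comp (ContinuousLinearMap.apply ℂ H c) with hΦ
    have hev : (fun u =>
          (1 - w x * (starRingEnd ℂ) (w ((starRingEnd ℂ) u))) / (1 - x * u))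
        =ᶠ[nhds u0] (fun u => Φ (Ring.inverse (1 - u • A'))) := by
      filter_upwards [isOpen_ball.mem_nhds (mem_ball_zero_iff.mpr hu0)] with u hu
      rw [mem_ball_zero_iff] at hu
      have hkey := key_identity w A B C hreal hU11 hU12 hU21 hU22 hx hu
      rw [hkey, mul_div_cancel_left₀ _ (hxu_ne hx hu)]
      simp [hΦ, ContinuousLinearMap.comp_apply, ContinuousLinearMap.apply_apply, hRxd, hc, hA']
    rw [hev.iteratedDeriv_eq r]
    rw [iteratedDeriv_comp_inv_oneSub (by rw [hA']; exact hA'le) Φ r u0 hu0]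
    simp [hΦ, ContinuousLinearMap.comp_apply, ContinuousLinearMap.apply_apply, smul_eq_mul]
  set m : H := ((A' ^ r * (Ring.inverse (1 - u0 • A')) ^ (r + 1))) c with hm
  set Ψ : (H →L[ℂ] H) →L[ℂ] ℂ := C.comp (ContinuousLinearMap.apply ℂ H m) with hΨ
  have hev2 : (fun x => iteratedDeriv r (fun u =>
          (1 - w x * (starRingEnd ℂ) (w ((starRingEnd ℂ) u))) / (1 - x * u)) u0)
      =ᶠ[nhds z] (fun x => ((r.factorial : ℂ) • Ψ) (Ring.inverse (1 - x • A))) := by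
    filter_upwards [isOpen_ball.mem_nhds (mem_ball_zero_iff.mpr hz)] with x hx
    rw [mem_ball_zero_iff] at hx
    rw [step1 x hx]
    simp [hΨ, smul_eq_mul, ContinuousLinearMap.apply_apply, hm]
  rw [hev2.iteratedDeriv_eq ℓ]
  rw [iteratedDeriv_comp_inv_oneSub hAle _ ℓ z hz]
  simp only [ContinuousLinearMap.smul_apply, hΨ, ContinuousLinearMap.comp_apply,
    ContinuousLinearMap.apply_apply, smul_eq_mul]
  have hcomm : A' ^ r * (Ring.inverse (1 - u0 • A')) ^ (r + 1)
      = (Ring.inverse (1 - u0 • A')) ^ (r + 1) * A' ^ r :=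
    ((commute_inv_oneSub A' u0).pow_pow r (r + 1)).eq
  rw [hm, ← ContinuousLinearMap.mul_apply, hcomm, ← mul_assoc]
  have hfacl : (ℓ.factorial : ℂ) ≠ 0 := Nat.cast_ne_zero.mpr ℓ.factorial_ne_zero
  have hfacr : (r.factorial : ℂ) ≠ 0 := Nat.cast_ne_zero.mpr r.factorial_ne_zero
  field_simp
  simp only [mul_assoc]
end

section
/- Let f be a Schur function, b a finite Blaschke product, t a point on the unit circle, and m a positive integer. Then f(z) = b(z) + o((z - t)^m) as z → t nontangentially if and only if the nontangential boundary limits f_j(t) := lim_{z → t} f^{(j)}(z)/j! exist and equal b^{(j)}(t)/j! for j = 0, 1, ..., m. -/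
open Metric Filter

/-- `b` is a finite Blaschke product of degree `d`. -/
def IsFiniteBlaschke (d : ℕ) (b : ℂ → ℂ) : Prop :=
  ∃ c : ℂ, ‖c‖ = 1 ∧ ∃ a : Fin d → ℂ, (∀ j, ‖a j‖ < 1) ∧
    ∀ z : ℂ, b z = c * ∏ j, (z - a j) / (1 - (starRingEnd ℂ) (a j) * z)

/-- The Stolz angle at a boundary point `t` with aperture parameter `M`. -/
def stolzAngle (t : ℂ) (M : ℝ) : Set ℂ :=
  {z ∈ ball (0 : ℂ) 1 | ‖t - z‖ < M * (1 - ‖z‖)}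

section Aux

variable {t z : ℂ} {M : ℝ}

lemma stolz_mem_iff : z ∈ stolzAngle t M ↔ ‖z‖ < 1 ∧ ‖t - z‖ < M * (1 - ‖z‖) := by
  simp [stolzAngle, mem_ball, dist_zero_right]

lemma stolz_lower (ht : ‖t‖ = 1) : 1 - ‖z‖ ≤ ‖t - z‖ := by
  have := norm_sub_norm_le t z
  rw [ht] at this; linarith

lemma stolz_tz_pos (ht : ‖t‖ = 1) (hz : z ∈ stolzAngle t M) : 0 < ‖t - z‖ :=
  lt_of_lt_of_le (by linarith [(stolz_mem_iff.1 hz).1]) (stolz_lower ht)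

lemma stolz_segment (ht : ‖t‖ = 1) (hM : 0 < M) (hz : z ∈ stolzAngle t M)
    {s : ℝ} (hs0 : 0 ≤ s) (hs1 : s < 1) : z + s • (t - z) ∈ stolzAngle t M := by
  obtain ⟨hz1, hz2⟩ := stolz_mem_iff.1 hz
  have hw : z + s • (t - z) = (1-s) • z + s • t := by module
  have hwt : t - (z + s • (t - z)) = (1-s) • (t - z) := by module
  have hn : ‖z + s • (t - z)‖ ≤ (1-s) * ‖z‖ + s * ‖t‖ := by
    rw [hw]
    refine (norm_add_le _ _).trans ?_
    rw [norm_smul, norm_smul, Real.norm_eq_abs, Real.norm_eq_abs,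
      abs_of_nonneg (by linarith), abs_of_nonneg hs0]
  have hnt : ‖t - (z + s • (t - z))‖ = (1-s) * ‖t - z‖ := by
    rw [hwt, norm_smul, Real.norm_eq_abs, abs_of_nonneg (by linarith)]
  rw [ht] at hn
  rw [stolz_mem_iff, hnt]
  constructor
  · nlinarith
  · nlinarith

lemma stolz_closedBall (hM : 0 < M) (hz : z ∈ stolzAngle t M)
    {w : ℂ} (hw : dist w z ≤ (1-‖z‖)/2) : w ∈ stolzAngle t (2*M+1) := by
  obtain ⟨hz1, hz2⟩ := stolz_mem_iff.1 hz
  have h1 : ‖w‖ ≤ ‖z‖ + (1-‖z‖)/2 := by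
    have := norm_sub_norm_le w z
    rw [← dist_eq_norm] at this; linarith
  have h2 : ‖t - w‖ ≤ ‖t - z‖ + (1-‖z‖)/2 := by
    have : ‖t - w‖ ≤ ‖t - z‖ + ‖z - w‖ := by
      simpa using norm_add_le (t - z) (z - w)
    rw [show ‖z - w‖ = dist w z by rw [dist_eq_norm, norm_sub_rev]] at this
    linarith
  rw [stolz_mem_iff]
  constructor
  · linarith
  · nlinarith

lemma cauchy_step (ht : ‖t‖ = 1) {g : ℂ → ℂ} (hg : DifferentiableOn ℂ g (ball 0 1)) (k : ℕ)
    (H : ∀ M > (1:ℝ), (g =o[nhdsWithin t (stolzAngle t M)] fun z => (z - t)^(k+1))) :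
    ∀ M > (1:ℝ), (deriv g =o[nhdsWithin t (stolzAngle t M)] fun z => (z - t)^k) := by
  intro M hM
  have hM0 : 0 < M := by linarith
  rw [Asymptotics.isLittleO_iff]
  intro ε hε
  have hM' : (1:ℝ) < 2*M+1 := by linarith
  set P : ℝ := (3/2)^(k+1) with hP
  have hP0 : 0 < P := by positivity
  set ε' : ℝ := ε / (P * (2*M)) with hε'def
  have hε'0 : 0 < ε' := by positivity
  have h1 := (H (2*M+1) hM').def hε'0
  rw [eventually_nhdsWithin_iff, Metric.eventually_nhds_iff] at h1 ⊢
  obtain ⟨δ, hδ0, hb⟩ := h1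
  refine ⟨(2/3)*δ, by linarith, ?_⟩
  intro z hzd hzS
  obtain ⟨hz1, hz2⟩ := stolz_mem_iff.1 hzS
  have htz : 0 < ‖t - z‖ := stolz_tz_pos ht hzS
  set r : ℝ := (1 - ‖z‖)/2 with hr
  have hr0 : 0 < r := by rw [hr]; linarith
  have hsub : closedBall z r ⊆ ball (0:ℂ) 1 := by
    intro w hw
    have := (stolz_mem_iff.1 (stolz_closedBall hM0 hzS (mem_closedBall.1 hw))).1
    simpa [mem_ball, dist_zero_right] using this
  have hd : DiffContOnCl ℂ g (ball z r) := by
    refine DifferentiableOn.diffContOnCl ?_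
    rw [closure_ball z hr0.ne']
    exact hg.mono hsub
  set C : ℝ := ε' * ((3/2) * ‖z - t‖)^(k+1) with hC
  have hCbound : ∀ w ∈ sphere z r, ‖g w‖ ≤ C := by
    intro w hws
    have hwz : dist w z ≤ r := le_of_eq (mem_sphere.1 hws)
    have hwS : w ∈ stolzAngle t (2*M+1) := stolz_closedBall hM0 hzS hwz
    have hwt : ‖w - t‖ ≤ (3/2) * ‖z - t‖ := by
      have h3 : ‖w - t‖ ≤ ‖w - z‖ + ‖z - t‖ := by
        simpa using norm_add_le (w - z) (z - t)
      have h4 : ‖w - z‖ ≤ r := by rw [← dist_eq_norm]; exact hwz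
      have h5 : 1 - ‖z‖ ≤ ‖z - t‖ := by
        rw [norm_sub_rev]; exact stolz_lower ht
      rw [hr] at h4; linarith
    have hdw : dist w t < δ := by
      rw [dist_eq_norm]
      have : ‖z - t‖ < (2/3)*δ := by rw [← dist_eq_norm]; exact hzd
      linarith
    have h6 := hb hdw hwS
    refine h6.trans ?_
    rw [hC, norm_pow]
    have : ‖w - t‖^(k+1) ≤ ((3/2) * ‖z - t‖)^(k+1) :=
      pow_le_pow_left₀ (norm_nonneg _) hwt _
    exact mul_le_mul_of_nonneg_left this hε'0.le
  have key := Complex.norm_deriv_le_of_forall_mem_sphere_norm_le hr0 hd hCbound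
  refine key.trans ?_
  rw [norm_pow, div_le_iff₀ hr0]
  have hzt : ‖z - t‖ = ‖t - z‖ := norm_sub_rev z t
  have hexp : ((3/2) * ‖z - t‖)^(k+1) = P * (‖z - t‖^k * ‖z - t‖) := by
    rw [hP, mul_pow, pow_succ]; ring
  rw [hC, hexp, hε'def]
  have hAk : (0:ℝ) ≤ ‖z - t‖^k := by positivity
  have hrge : ‖z - t‖ ≤ 2 * M * r := by rw [hzt, hr]; linarith
  have hPM : P * (2*M) > 0 := by positivity
  rw [div_mul_eq_mul_div, div_le_iff₀ hPM]
  have h7 : ε * (P * (‖z - t‖^k * ‖z - t‖)) = ε * ‖z - t‖^k * ‖z - t‖ * P := by ring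
  have h8 : ε * ‖z - t‖^k * r * (P*(2*M)) = ε * ‖z - t‖^k * (2*M*r) * P := by ring
  rw [h7, h8]
  exact mul_le_mul_of_nonneg_right
    (mul_le_mul_of_nonneg_left hrge (mul_nonneg hε.le hAk)) hP0.le

lemma integrate_step (ht : ‖t‖ = 1) {g : ℂ → ℂ} (hg : DifferentiableOn ℂ g (ball 0 1))
    (k : ℕ) {M : ℝ} (hM : 1 < M)
    (hd : deriv g =o[nhdsWithin t (stolzAngle t M)] fun z => (z - t)^k)
    (h0 : Tendsto g (nhdsWithin t (stolzAngle t M)) (nhds 0)) :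
    g =o[nhdsWithin t (stolzAngle t M)] fun z => (z - t)^(k+1) := by
  have hM0 : (0:ℝ) < M := by linarith
  rw [Asymptotics.isLittleO_iff]
  intro ε hε
  have h1 := hd.def hε
  rw [eventually_nhdsWithin_iff, Metric.eventually_nhds_iff] at h1 ⊢
  obtain ⟨δ, hδ0, hb⟩ := h1
  refine ⟨δ, hδ0, ?_⟩
  intro z hzd hzS
  set B : ℝ := ‖z - t‖ with hB
  have hBδ : B < δ := by rw [hB, ← dist_eq_norm]; exact hzd
  set w : ℝ → ℂ := fun s => z + s • (t - z) with hw
  have hwS : ∀ s:ℝ, 0 ≤ s → s < 1 → w s ∈ stolzAngle t M :=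
    fun s a b => stolz_segment ht hM0 hzS a b
  have hwt : ∀ s:ℝ, 0 ≤ s → s ≤ 1 → ‖w s - t‖ ≤ B := by
    intro s h1 h2
    have he : w s - t = (1-s) • (z - t) := by rw [hw]; module
    rw [he, norm_smul, Real.norm_eq_abs, abs_of_nonneg (by linarith)]
    nlinarith [norm_nonneg (z - t)]
  have hwz : ∀ s:ℝ, 0 ≤ s → s ≤ 1 → ‖w s - z‖ ≤ B := by
    intro s h1 h2
    have he : w s - z = s • (t - z) := by rw [hw]; module
    rw [he, norm_smul, Real.norm_eq_abs, abs_of_nonneg h1, hB, norm_sub_rev]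
    nlinarith [norm_nonneg (z - t)]
  have seg : ∀ s:ℝ, 0 ≤ s → s < 1 → ‖g (w s) - g z‖ ≤ ε * B^k * ‖w s - z‖ := by
    intro s hs0 hs1
    have hmem : ∀ x ∈ segment ℝ z (w s), ∃ u:ℝ, 0 ≤ u ∧ u ≤ s ∧ x = w u := by
      intro x hx
      rw [segment_eq_image'] at hx
      obtain ⟨u, hu, rfl⟩ := hx
      refine ⟨u*s, mul_nonneg hu.1 hs0, by nlinarith [hu.2], ?_⟩
      rw [hw]
      show z + u • ((z + s • (t - z)) - z) = z + (u*s) • (t - z)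
      rw [add_sub_cancel_left, smul_smul]
    refine Convex.norm_image_sub_le_of_norm_hasFDerivWithin_le
      (f' := fun x => ((1:ℂ →L[ℂ] ℂ).smulRight (deriv g x)).restrictScalars ℝ)
      (fun x hx => ?_) (fun x hx => ?_) (convex_segment _ _)
      (left_mem_segment _ _ _) (right_mem_segment _ _ _)
    · obtain ⟨u, hu0, hus, rfl⟩ := hmem x hx
      have hxS : w u ∈ stolzAngle t M := hwS u hu0 (lt_of_le_of_lt hus hs1)
      have hxball : w u ∈ ball (0:ℂ) 1 := by
        have := (stolz_mem_iff.1 hxS).1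
        simpa [mem_ball, dist_zero_right] using this
      have hdiff : DifferentiableAt ℂ g (w u) :=
        hg.differentiableAt (isOpen_ball.mem_nhds hxball)
      exact ((hasDerivAt_iff_hasFDerivAt.1 hdiff.hasDerivAt).restrictScalars ℝ).hasFDerivWithinAt
    · obtain ⟨u, hu0, hus, rfl⟩ := hmem x hx
      have hxS : w u ∈ stolzAngle t M := hwS u hu0 (lt_of_le_of_lt hus hs1)
      have hxd : dist (w u) t < δ := by
        rw [dist_eq_norm]
        exact lt_of_le_of_lt (hwt u hu0 (by linarith)) hBδ
      have h2 := hb hxd hxS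
      rw [ContinuousLinearMap.norm_restrictScalars, ContinuousLinearMap.norm_smulRight_apply]
      simp only [ContinuousLinearMap.one_def, ContinuousLinearMap.norm_id, one_mul]
      refine h2.trans ?_
      rw [norm_pow]
      exact mul_le_mul_of_nonneg_left
        (pow_le_pow_left₀ (norm_nonneg _) (hwt u hu0 (by linarith)) k) hε.le
  have hconv : Tendsto w (nhdsWithin 1 (Set.Iio (1:ℝ))) (nhdsWithin t (stolzAngle t M)) := by
    apply tendsto_nhdsWithin_of_tendsto_nhds_of_eventually_within
    · have hcont : Continuous w := continuous_const.add (continuous_id.smul continuous_const)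
      have hw1 : w 1 = t := by
        rw [hw]; show z + (1:ℝ) • (t - z) = t; module
      exact hw1 ▸ (hcont.tendsto 1).mono_left nhdsWithin_le_nhds
    · filter_upwards [self_mem_nhdsWithin,
        (eventually_gt_nhds zero_lt_one).filter_mono nhdsWithin_le_nhds] with s hs1 hs0
      exact hwS s hs0.le hs1
  have hfin : ∀ᶠ s in nhdsWithin 1 (Set.Iio (1:ℝ)), ‖g z‖ ≤ ‖g (w s)‖ + ε * B^k * B := by
    filter_upwards [self_mem_nhdsWithin,
      (eventually_gt_nhds zero_lt_one).filter_mono nhdsWithin_le_nhds] with s hs1 hs0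
    have h9 := seg s hs0.le hs1
    have h10 : ε * B^k * ‖w s - z‖ ≤ ε * B^k * B :=
      mul_le_mul_of_nonneg_left (hwz s hs0.le hs1.le) (by positivity)
    have h11 : ‖g z‖ - ‖g (w s)‖ ≤ ‖g (w s) - g z‖ := by
      rw [norm_sub_rev]; exact norm_sub_norm_le _ _
    linarith
  have hlim : Tendsto (fun s => ‖g (w s)‖ + ε * B^k * B) (nhdsWithin 1 (Set.Iio (1:ℝ)))
      (nhds (0 + ε * B^k * B)) := by
    refine Tendsto.add_const _ ?_
    have := (h0.comp hconv).norm
    simpa using this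
  have hfinal : ‖g z‖ ≤ 0 + ε * B^k * B := ge_of_tendsto hlim hfin
  rw [norm_pow, ← hB, pow_succ]
  nlinarith [hfinal]

lemma blaschke_analytic {d : ℕ} {b : ℂ → ℂ} (hb : IsFiniteBlaschke d b) :
    ∃ U : Set ℂ, IsOpen U ∧ closedBall (0:ℂ) 1 ⊆ U ∧ AnalyticOnNhd ℂ b U := by
  obtain ⟨c, hc, a, ha, hbe⟩ := hb
  refine ⟨⋂ j, {z : ℂ | 1 - (starRingEnd ℂ) (a j) * z ≠ 0}, ?_, ?_, ?_⟩
  · refine isOpen_iInter_of_finite fun j => ?_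
    exact isOpen_compl_singleton.preimage (continuous_const.sub (continuous_const.mul continuous_id))
  · intro z hz
    rw [mem_closedBall, dist_zero_right] at hz
    refine Set.mem_iInter.2 fun j => ?_
    simp only [Set.mem_setOf_eq, sub_ne_zero]
    intro hcon
    have : ‖(starRingEnd ℂ) (a j) * z‖ < 1 := by
      rw [norm_mul, RCLike.norm_conj]
      nlinarith [ha j, norm_nonneg (a j), norm_nonneg z]
    rw [← hcon] at this
    simp at this
  · refine DifferentiableOn.analyticOnNhd ?_ (isOpen_iInter_of_finite fun j =>
      isOpen_compl_singleton.preimage (continuous_const.sub (continuous_const.mul continuous_id)))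
    have hbf : b = fun z => c * ∏ j, (z - a j) / (1 - (starRingEnd ℂ) (a j) * z) :=
      funext hbe
    rw [hbf]
    refine DifferentiableOn.const_mul ?_ c
    refine DifferentiableOn.fun_finsetProd fun j _ => ?_
    refine DifferentiableOn.div ((differentiable_id.sub_const _).differentiableOn)
      (((differentiable_const (1:ℂ)).sub (differentiable_id.const_mul _)).differentiableOn)
      fun z hz => Set.mem_iInter.1 hz j

lemma iter_sub {s : Set ℂ} (hs : IsOpen s) {f b : ℂ → ℂ}
    (hf : AnalyticOnNhd ℂ f s) (hb : AnalyticOnNhd ℂ b s) :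
    ∀ n : ℕ, ∀ z ∈ s, deriv^[n] (fun w => f w - b w) z = deriv^[n] f z - deriv^[n] b z := by
  intro n
  induction n with
  | zero => intro z _; simp
  | succ n IH =>
    intro z hz
    rw [Function.iterate_succ_apply', Function.iterate_succ_apply',
      Function.iterate_succ_apply']
    have heq : deriv^[n] (fun w => f w - b w) =ᶠ[nhds z]
        fun w => deriv^[n] f w - deriv^[n] b w :=
      Filter.eventuallyEq_of_mem (hs.mem_nhds hz) IH
    rw [heq.deriv_eq]
    exact deriv_sub ((hf.iterated_deriv n) z hz).differentiableAt
      ((hb.iterated_deriv n) z hz).differentiableAt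

lemma key_forward {t : ℂ} (ht : ‖t‖ = 1) {g : ℂ → ℂ}
    (hg : DifferentiableOn ℂ g (ball 0 1)) {m : ℕ}
    (H : ∀ M > (1:ℝ), g =o[nhdsWithin t (stolzAngle t M)] fun z => (z - t)^m) :
    ∀ j ≤ m, ∀ M > (1:ℝ),
      deriv^[j] g =o[nhdsWithin t (stolzAngle t M)] fun z => (z - t)^(m-j) := by
  intro j
  induction j with
  | zero => intro _ M hM; simpa using H M hM
  | succ j IH =>
    intro hj M hM
    have h1 : ∀ M' > (1:ℝ),
        deriv^[j] g =o[nhdsWithin t (stolzAngle t M')] fun z => (z - t)^((m - (j+1))+1) := by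
      have he : m - j = (m - (j+1)) + 1 := by omega
      intro M' hM'
      have := IH (by omega) M' hM'
      rwa [he] at this
    have hgj : DifferentiableOn ℂ (deriv^[j] g) (ball 0 1) :=
      ((hg.analyticOnNhd isOpen_ball).iterated_deriv j).differentiableOn
    have h2 := cauchy_step ht hgj (m - (j+1)) h1 M hM
    rwa [← Function.iterate_succ_apply' deriv j g] at h2

lemma key_reverse {t : ℂ} (ht : ‖t‖ = 1) {M : ℝ} (hM : 1 < M) :
    ∀ k : ℕ, ∀ g : ℂ → ℂ, DifferentiableOn ℂ g (ball 0 1) →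
      (∀ j ≤ k, Tendsto (deriv^[j] g) (nhdsWithin t (stolzAngle t M)) (nhds 0)) →
      g =o[nhdsWithin t (stolzAngle t M)] fun z => (z - t)^k := by
  intro k
  induction k with
  | zero =>
    intro g hg h0
    have := h0 0 le_rfl
    simp only [pow_zero]
    rw [Asymptotics.isLittleO_one_iff]
    simpa using this
  | succ k IH =>
    intro g hg h0
    refine integrate_step ht hg k hM (IH (deriv g)
      ((hg.analyticOnNhd isOpen_ball).deriv.differentiableOn) ?_) ?_
    · intro j hj
      have := h0 (j+1) (by omega)
      rwa [Function.iterate_succ_apply] at this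
    · simpa using h0 0 (by omega)

/-- For a Schur function `f` and a finite Blaschke product `b`, the nontangential
asymptotic `f(z) = b(z) + o((z-t)^m)` holds if and only if for `j = 0, ..., m` the
nontangential limits of `f^{(j)}(z)/j!` exist and equal `b^{(j)}(t)/j!`. -/
theorem stmt16 (f b : ℂ → ℂ) (d : ℕ) (hf : SchurClass f) (hb : IsFiniteBlaschke d b)
    (t : ℂ) (ht : ‖t‖ = 1) (m : ℕ) (hm : 0 < m) :
    (∀ M > (1 : ℝ),
      (fun z => f z - b z) =o[nhdsWithin t (stolzAngle t M)] fun z => (z - t) ^ m) ↔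
    (∀ j ≤ m, ∀ M > (1 : ℝ),
      Tendsto (fun z => iteratedDeriv j f z / (Nat.factorial j : ℂ))
        (nhdsWithin t (stolzAngle t M))
        (nhds (iteratedDeriv j b t / (Nat.factorial j : ℂ)))) := by
  obtain ⟨U, hUopen, hUsub, hbA⟩ := blaschke_analytic hb
  have hball : ball (0:ℂ) 1 ⊆ U := fun z hz => hUsub (ball_subset_closedBall hz)
  have htU : t ∈ U := hUsub (by simp [mem_closedBall, dist_zero_right, ht])
  have hbdiff : DifferentiableOn ℂ b (ball (0:ℂ) 1) := (hbA.differentiableOn).mono hball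
  have hgdiff : DifferentiableOn ℂ (fun z => f z - b z) (ball (0:ℂ) 1) := hf.1.sub hbdiff
  have hfA : AnalyticOnNhd ℂ f (ball (0:ℂ) 1) := hf.1.analyticOnNhd isOpen_ball
  have hbAball : AnalyticOnNhd ℂ b (ball (0:ℂ) 1) := hbA.mono hball
  have hbt_cont : ∀ n : ℕ, ∀ M : ℝ, Tendsto (deriv^[n] b)
      (nhdsWithin t (stolzAngle t M)) (nhds (deriv^[n] b t)) := fun n M =>
    (((hbA.iterated_deriv n) t htU).continuousAt.tendsto).mono_left nhdsWithin_le_nhds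
  have hevball : ∀ M : ℝ, ∀ᶠ z in nhdsWithin t (stolzAngle t M), z ∈ ball (0:ℂ) 1 := by
    intro M
    filter_upwards [self_mem_nhdsWithin] with z hz
    have := (stolz_mem_iff.1 hz).1
    simpa [mem_ball, dist_zero_right] using this
  constructor
  · intro H j hj M hM
    have h2 := key_forward ht hgdiff H j hj M hM
    have h3 : Tendsto (deriv^[j] (fun z => f z - b z))
        (nhdsWithin t (stolzAngle t M)) (nhds 0) := by
      rw [← Asymptotics.isLittleO_one_iff ℂ]
      have hten : Tendsto (fun z : ℂ => (z - t)^(m-j)) (nhdsWithin t (stolzAngle t M))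
          (nhds ((t - t)^(m-j))) :=
        (((continuous_id.sub continuous_const).pow _).tendsto t).mono_left nhdsWithin_le_nhds
      exact h2.trans_isBigO (hten.isBigO_one ℂ)
    have h4 : Tendsto (fun z => deriv^[j] (fun w => f w - b w) z + deriv^[j] b z)
        (nhdsWithin t (stolzAngle t M)) (nhds (0 + deriv^[j] b t)) := h3.add (hbt_cont j M)
    rw [zero_add] at h4
    have h5 : Tendsto (deriv^[j] f) (nhdsWithin t (stolzAngle t M))
        (nhds (deriv^[j] b t)) := by
      refine h4.congr' ?_
      filter_upwards [hevball M] with z hz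
      rw [iter_sub isOpen_ball hfA hbAball j z hz]
      ring
    rw [iteratedDeriv_eq_iterate, iteratedDeriv_eq_iterate]
    exact h5.div_const _
  · intro H M hM
    refine key_reverse ht hM m (fun z => f z - b z) hgdiff ?_
    intro j hj
    have h1 := H j hj M hM
    have h2 := h1.mul_const ((Nat.factorial j : ℂ))
    have hfac : (Nat.factorial j : ℂ) ≠ 0 :=
      Nat.cast_ne_zero.2 (Nat.factorial_ne_zero j)
    simp only [div_mul_cancel₀ _ hfac] at h2
    rw [iteratedDeriv_eq_iterate, iteratedDeriv_eq_iterate] at h2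
    have h3 : Tendsto (fun z => deriv^[j] f z - deriv^[j] b z)
        (nhdsWithin t (stolzAngle t M)) (nhds (deriv^[j] b t - deriv^[j] b t)) :=
      h2.sub (hbt_cont j M)
    rw [sub_self] at h3
    refine h3.congr' ?_
    filter_upwards [hevball M] with z hz
    exact (iter_sub isOpen_ball hfA hbAball j z hz).symm
end Aux
end
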